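/- arXiv:1704.02004 — 3 statements merged into one kernel-verified Lean document; each statement's English description precedes it below -/
import Mathlib

section
/- Let T be a rooted binary phylogenetic tree on a finite taxon set X of size N, equipped with the rooted triple metrization, and let d_RT denote the induced tree metric on X. Then for all distinct x, y ∈ X, d_RT(x,y) = 2·|R_{x,y}| + 2, where R_{x,y} is the set of rooted triples displayed on T of the form xz|y or yz|x (i.e., rooted triples separating x and y). -/
open Function

/-- A rooted phylogenetic tree on taxon set `X`, with vertex set `V`: there is a root,
every vertex reaches the root by iterating the parent map, the leaves (vertices with no
children) are bijectively labeled by the taxa, and every internal vertex has at least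
two children (so the root has degree ≥ 2 and other internal vertices degree ≥ 3). -/
structure RPhylo (X V : Type*) where
  root : V
  parent : V → V
  leaf : X → V
  parent_root : parent root = root
  reach : ∀ v : V, ∃ n : ℕ, parent^[n] v = root
  leaf_inj : Function.Injective leaf
  leaf_no_child : ∀ (x : X) (w : V), parent w = leaf x → w = leaf x
  leaf_surj : ∀ v : V, (∀ w : V, parent w = v → w = v) → ∃ x : X, leaf x = v
  internal_two : ∀ v : V, ({w | parent w = v ∧ w ≠ v} : Set V) = ∅ ∨
      2 ≤ ({w | parent w = v ∧ w ≠ v} : Set V).ncard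

namespace RPhylo

variable {X V : Type*}

/-- The children of a vertex. -/
def children (T : RPhylo X V) (v : V) : Set V := {w | T.parent w = v ∧ w ≠ v}

/-- A rooted phylogenetic tree is binary if every non-leaf vertex has exactly two
children (root of degree 2, other internal vertices of degree 3). -/
def IsBinary (T : RPhylo X V) : Prop :=
  ∀ v : V, T.children v = ∅ ∨ (T.children v).ncard = 2

/-- `u` is a (weak) ancestor of `v`. -/
def Anc (T : RPhylo X V) (u v : V) : Prop := ∃ n : ℕ, T.parent^[n] v = u

/-- The set of taxa labelling leaf descendants of `v` (a leaf is its own descendant). -/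
def clade (T : RPhylo X V) (v : V) : Set X := {x | T.Anc v (T.leaf x)}

/-- `m` is the most recent common ancestor of the set `S` of vertices. -/
def IsMRCA (T : RPhylo X V) (S : Set V) (m : V) : Prop :=
  (∀ v ∈ S, T.Anc m v) ∧ ∀ a : V, (∀ v ∈ S, T.Anc a v) → T.Anc a m

/-- Weight, under the rooted triple metrization, of the edge from `v` to its parent:
the drop in the number of leaf descendants from parent to child. -/
noncomputable def wRT (T : RPhylo X V) (v : V) : ℕ :=
  (T.clade (T.parent v)).ncard - (T.clade v).ncard

/-- Sum of the weights (under the weighting `w`, where `w v` is the weight of the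
edge from `v` to its parent) of the first `n` edges on the path from `v` toward the root. -/
def upSum (T : RPhylo X V) (w : V → ℕ) : V → ℕ → ℕ
  | _, 0 => 0
  | v, n + 1 => w v + T.upSum w (T.parent v) n

/-- `T` displays the rooted triple `ab|c`: the MRCA of `a,b` is a proper descendant of
the MRCA of `a,b,c`. -/
def DisplaysTriple (T : RPhylo X V) (a b c : X) : Prop :=
  ∃ m₁ m₂ : V, T.IsMRCA {T.leaf a, T.leaf b} m₁ ∧
    T.IsMRCA {T.leaf a, T.leaf b, T.leaf c} m₂ ∧ m₁ ≠ m₂ ∧ T.Anc m₂ m₁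

/-- `T` displays the degenerate (star) rooted triple `abc`: the induced tree on
`{a,b,c}` is unresolved, i.e. all three pairwise MRCAs coincide. -/
def DisplaysStarTriple (T : RPhylo X V) (a b c : X) : Prop :=
  ∃ m : V, T.IsMRCA {T.leaf a, T.leaf b} m ∧ T.IsMRCA {T.leaf a, T.leaf c} m ∧
    T.IsMRCA {T.leaf b, T.leaf c} m

end RPhylo

namespace RPhylo

variable {X V : Type*} (T : RPhylo X V)

theorem anc_refl (v : V) : T.Anc v v := ⟨0, rfl⟩

theorem anc_trans {u v w : V} (h1 : T.Anc u v) (h2 : T.Anc v w) : T.Anc u w := by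
  obtain ⟨n, hn⟩ := h1; obtain ⟨k, hk⟩ := h2
  exact ⟨n + k, by rw [Function.iterate_add_apply, hk, hn]⟩

theorem iterate_root (n : ℕ) : T.parent^[n] T.root = T.root := by
  induction n with
  | zero => rfl
  | succ n ih => rw [Function.iterate_succ_apply, T.parent_root, ih]

theorem anc_root (v : V) : T.Anc T.root v := T.reach v

theorem anc_antisymm {u v : V} (h1 : T.Anc u v) (h2 : T.Anc v u) : u = v := by
  obtain ⟨n, hn⟩ := h1; obtain ⟨k, hk⟩ := h2
  rcases Nat.eq_zero_or_pos (n + k) with h | h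
  · have hn0 : n = 0 := by omega
    subst hn0; exact hn.symm
  · have hper : T.parent^[k + n] v = v := by
      rw [Function.iterate_add_apply, hn, hk]
    have hmul : ∀ j, T.parent^[(k + n) * j] v = v := by
      intro j; induction j with
      | zero => simp
      | succ j ih =>
        rw [Nat.mul_succ, Function.iterate_add_apply, hper, ih]
    obtain ⟨r, hr⟩ := T.reach v
    have hv : v = T.root := by
      have hMr : r ≤ (k + n) * (r + 1) :=
        le_trans (Nat.le_succ r) (Nat.le_mul_of_pos_left _ (by omega : 0 < k + n))
      have h1 : T.parent^[(k + n) * (r + 1) - r + r] v = v := by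
        rw [Nat.sub_add_cancel hMr]; exact hmul (r + 1)
      rw [Function.iterate_add_apply, hr, iterate_root] at h1
      exact h1.symm
    subst hv
    rw [iterate_root] at hn
    exact hn.symm

theorem anc_comparable {a b w : V} (ha : T.Anc a w) (hb : T.Anc b w) :
    T.Anc a b ∨ T.Anc b a := by
  obtain ⟨i, hi⟩ := ha; obtain ⟨j, hj⟩ := hb
  rcases le_total i j with h | h
  · right
    exact ⟨j - i, by rw [← hi, ← Function.iterate_add_apply, Nat.sub_add_cancel h, hj]⟩
  · left
    exact ⟨i - j, by rw [← hj, ← Function.iterate_add_apply, Nat.sub_add_cancel h, hi]⟩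

theorem mrca_exists (S : Set V) {v₀ : V} (hv : v₀ ∈ S) : ∃ m, T.IsMRCA S m := by
  classical
  have hex : ∃ n, ∀ v ∈ S, T.Anc (T.parent^[n] v₀) v := by
    obtain ⟨r, hr⟩ := T.reach v₀
    exact ⟨r, by rw [hr]; intro v _; exact T.anc_root v⟩
  refine ⟨T.parent^[Nat.find hex] v₀, Nat.find_spec hex, ?_⟩
  intro a ha
  obtain ⟨na, hna⟩ := ha v₀ hv
  have hle : Nat.find hex ≤ na := by
    by_contra hlt
    push_neg at hlt
    exact Nat.find_min hex (m := na) hlt (by rw [hna]; exact ha)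
  exact ⟨na - Nat.find hex, by
    rw [← Function.iterate_add_apply, Nat.sub_add_cancel hle, hna]⟩

theorem clade_mono {u v : V} (h : T.Anc u v) : T.clade v ⊆ T.clade u :=
  fun _ hx => T.anc_trans h hx

theorem no_desc_of_leaf (x : X) : ∀ (n : ℕ) (w : V), T.parent^[n] w = T.leaf x → w = T.leaf x := by
  intro n
  induction n with
  | zero => intro w h; exact h
  | succ n ih =>
    intro w h
    rw [Function.iterate_succ_apply] at h
    exact T.leaf_no_child x w (ih _ h)

theorem clade_leaf (x : X) : T.clade (T.leaf x) = {x} := by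
  ext z
  constructor
  · rintro ⟨n, hn⟩
    exact T.leaf_inj (T.no_desc_of_leaf x n _ hn)
  · rintro rfl
    exact T.anc_refl _

theorem upSum_wRT [Fintype X] (v : V) (n : ℕ) :
    T.upSum T.wRT v n + (T.clade v).ncard = (T.clade (T.parent^[n] v)).ncard := by
  induction n generalizing v with
  | zero => simp [upSum]
  | succ n ih =>
    rw [Function.iterate_succ_apply]
    have hle : (T.clade v).ncard ≤ (T.clade (T.parent v)).ncard :=
      Set.ncard_le_ncard (T.clade_mono ⟨1, rfl⟩) (Set.toFinite _)
    have hs : T.upSum T.wRT v (n + 1) = T.wRT v + T.upSum T.wRT (T.parent v) n := rfl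
    have hih := ih (T.parent v)
    have hw : T.wRT v + (T.clade v).ncard = (T.clade (T.parent v)).ncard := by
      unfold wRT; omega
    rw [hs]
    omega

theorem anc_parent (v : V) : T.Anc (T.parent v) v := ⟨1, rfl⟩

theorem exists_child_anc {m v : V} (h : T.Anc m v) (hne : v ≠ m) :
    ∃ c, T.parent c = m ∧ c ≠ m ∧ T.Anc c v := by
  classical
  have hex : ∃ n, T.parent^[n] v = m := h
  have hspec := Nat.find_spec hex
  have hpos : 0 < Nat.find hex := by
    rcases Nat.eq_zero_or_pos (Nat.find hex) with h0 | h0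
    · rw [h0] at hspec; exact absurd hspec hne
    · exact h0
  refine ⟨T.parent^[Nat.find hex - 1] v, ?_, ?_, ⟨Nat.find hex - 1, rfl⟩⟩
  · have : T.parent^[(Nat.find hex - 1) + 1] v = m := by
      rwa [Nat.sub_add_cancel hpos]
    rwa [Function.iterate_succ_apply'] at this
  · intro heq
    exact Nat.find_min hex (by omega) heq

theorem anc_of_displays {x y z : X} {m : V} (hm : T.IsMRCA {T.leaf x, T.leaf y} m)
    (hd : T.DisplaysTriple x z y) : T.Anc m (T.leaf z) := by
  obtain ⟨m₁, m₂, h1, h2, hne, h21⟩ := hd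
  have hm1x : T.Anc m₁ (T.leaf x) := h1.1 _ (by simp)
  have hm1z : T.Anc m₁ (T.leaf z) := h1.1 _ (by simp)
  have hmx : T.Anc m (T.leaf x) := hm.1 _ (by simp)
  have hmy : T.Anc m (T.leaf y) := hm.1 _ (by simp)
  rcases T.anc_comparable hmx hm1x with h | h
  · exact T.anc_trans h hm1z
  · exfalso
    apply hne
    apply T.anc_antisymm _ h21
    apply h2.2 m₁
    intro v hv
    simp only [Set.mem_insert_iff, Set.mem_singleton_iff] at hv
    rcases hv with rfl | rfl | rfl
    · exact hm1x
    · exact hm1z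
    · exact T.anc_trans h hmy

theorem displays_aux {a b c : X} {m ca : V}
    (hma : T.Anc m (T.leaf a)) (hmb : T.Anc m (T.leaf b)) (hmc : T.Anc m (T.leaf c))
    (hmrca : ∀ v, T.Anc v (T.leaf a) → T.Anc v (T.leaf c) → T.Anc v m)
    (hca : T.parent ca = m) (hcane : ca ≠ m)
    (haa : T.Anc ca (T.leaf a)) (hab : T.Anc ca (T.leaf b)) :
    T.DisplaysTriple a b c := by
  obtain ⟨m₁, h1⟩ := T.mrca_exists {T.leaf a, T.leaf b} (by simp : T.leaf a ∈ _)
  have hm2 : T.IsMRCA {T.leaf a, T.leaf b, T.leaf c} m := by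
    constructor
    · intro v hv
      simp only [Set.mem_insert_iff, Set.mem_singleton_iff] at hv
      rcases hv with rfl | rfl | rfl
      exacts [hma, hmb, hmc]
    · intro v hv
      exact hmrca v (hv _ (by simp)) (hv _ (by simp))
  have hca1 : T.Anc ca m₁ := by
    apply h1.2 ca
    intro v hv
    simp only [Set.mem_insert_iff, Set.mem_singleton_iff] at hv
    rcases hv with rfl | rfl
    exacts [haa, hab]
  have hmca : T.Anc m ca := hca ▸ T.anc_parent ca
  refine ⟨m₁, m, h1, hm2, ?_, T.anc_trans hmca hca1⟩
  rintro rfl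
  exact hcane (T.anc_antisymm hca1 hmca)

theorem displays_of_mem_clade [Fintype V] (hbin : T.IsBinary) {x y z : X} {m : V}
    (hxy : x ≠ y) (hm : T.IsMRCA {T.leaf x, T.leaf y} m)
    (hz : T.Anc m (T.leaf z)) (hzx : z ≠ x) (hzy : z ≠ y) :
    T.DisplaysTriple x z y ∨ T.DisplaysTriple y z x := by
  have hmx : T.Anc m (T.leaf x) := hm.1 _ (by simp)
  have hmy : T.Anc m (T.leaf y) := hm.1 _ (by simp)
  have hxm : T.leaf x ≠ m := by
    rintro rfl
    obtain ⟨n, hn⟩ := hmy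
    exact hxy (T.leaf_inj (T.no_desc_of_leaf x n _ hn)).symm
  have hym : T.leaf y ≠ m := by
    rintro rfl
    obtain ⟨n, hn⟩ := hmx
    exact hxy (T.leaf_inj (T.no_desc_of_leaf y n _ hn))
  obtain ⟨cx, hcx, hcxne, hcxx⟩ := T.exists_child_anc hmx hxm
  obtain ⟨cy, hcy, hcyne, hcyy⟩ := T.exists_child_anc hmy hym
  have hcxy : cx ≠ cy := by
    rintro rfl
    apply hcxne
    apply T.anc_antisymm _ (hcx ▸ T.anc_parent cx)
    apply hm.2 cx
    intro v hv
    simp only [Set.mem_insert_iff, Set.mem_singleton_iff] at hv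
    rcases hv with rfl | rfl
    exacts [hcxx, hcyy]
  have hzm : T.leaf z ≠ m := by
    rintro rfl
    exact hcxne (T.leaf_no_child z cx hcx)
  obtain ⟨cz, hcz, hczne, hczz⟩ := T.exists_child_anc hz hzm
  have hch : T.children m = {cx, cy} := by
    rcases hbin m with h | h
    · exact absurd (show cx ∈ T.children m from ⟨hcx, hcxne⟩) (by rw [h]; simp)
    · refine (Set.eq_of_subset_of_ncard_le ?_ ?_ (Set.toFinite _)).symm
      · rintro v (rfl | rfl)
        · exact ⟨hcx, hcxne⟩
        · exact ⟨hcy, hcyne⟩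
      · rw [h, Set.ncard_pair hcxy]
  have hczmem : cz ∈ ({cx, cy} : Set V) := hch ▸ (show cz ∈ T.children m from ⟨hcz, hczne⟩)
  have hmrca1 : ∀ v, T.Anc v (T.leaf x) → T.Anc v (T.leaf y) → T.Anc v m := by
    intro v h1 h2
    apply hm.2 v
    intro w hw
    simp only [Set.mem_insert_iff, Set.mem_singleton_iff] at hw
    rcases hw with rfl | rfl
    exacts [h1, h2]
  rcases hczmem with rfl | rfl
  · exact Or.inl (T.displays_aux hmx hz hmy hmrca1 hcz hczne hcxx hczz)
  · exact Or.inr (T.displays_aux hmy hz hmx (fun v h1 h2 => hmrca1 v h2 h1) hcz hczne hcyy hczz)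

end RPhylo


/-- **Theorem (rooted triple metrization).** For a rooted binary phylogenetic tree `T`
on `X` with `|X| = N`, equipped with the rooted triple metrization, and distinct taxa
`x ≠ y`, the tree-metric distance `d_RT(x,y)` (the sum of the edge weights along the
path between the leaves `x` and `y`, i.e. up from `x` to `m = MRCA(x,y)` and down to
`y`) equals `2·|R_{x,y}| + 2`, where `R_{x,y}` is the set of rooted triples displayed
on `T` of the form `xz|y` or `yz|x`. -/
theorem rooted_triple_metrization_distance
    {X V : Type*} [Fintype X] [Fintype V]
    (T : RPhylo X V) (hbin : T.IsBinary)
    (x y : X) (hxy : x ≠ y)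
    (m : V) (hm : T.IsMRCA {T.leaf x, T.leaf y} m)
    (kx ky : ℕ)
    (hkx : T.parent^[kx] (T.leaf x) = m) (hkx' : ∀ i < kx, T.parent^[i] (T.leaf x) ≠ m)
    (hky : T.parent^[ky] (T.leaf y) = m) (hky' : ∀ i < ky, T.parent^[i] (T.leaf y) ≠ m) :
    T.upSum T.wRT (T.leaf x) kx + T.upSum T.wRT (T.leaf y) ky
      = 2 * ({z : X | z ≠ x ∧ z ≠ y ∧
          (T.DisplaysTriple x z y ∨ T.DisplaysTriple y z x)} : Set X).ncard + 2 := by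
  classical
  have hmx : T.Anc m (T.leaf x) := hm.1 _ (by simp)
  have hmy : T.Anc m (T.leaf y) := hm.1 _ (by simp)
  have h1 : T.upSum T.wRT (T.leaf x) kx + 1 = (T.clade m).ncard := by
    have h := T.upSum_wRT (T.leaf x) kx
    rw [hkx, T.clade_leaf] at h
    simpa using h
  have h2 : T.upSum T.wRT (T.leaf y) ky + 1 = (T.clade m).ncard := by
    have h := T.upSum_wRT (T.leaf y) ky
    rw [hky, T.clade_leaf] at h
    simpa using h
  have hm' : T.IsMRCA {T.leaf y, T.leaf x} m := by rwa [Set.pair_comm]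
  have hset : ({z : X | z ≠ x ∧ z ≠ y ∧
      (T.DisplaysTriple x z y ∨ T.DisplaysTriple y z x)} : Set X)
      = T.clade m \ {x, y} := by
    ext z
    simp only [Set.mem_setOf_eq, Set.mem_diff, Set.mem_insert_iff,
      Set.mem_singleton_iff, not_or]
    constructor
    · rintro ⟨hzx, hzy, hd | hd⟩
      · exact ⟨T.anc_of_displays hm hd, hzx, hzy⟩
      · exact ⟨T.anc_of_displays hm' hd, hzx, hzy⟩
    · rintro ⟨hzm, hzx, hzy⟩
      exact ⟨hzx, hzy, T.displays_of_mem_clade hbin hxy hm hzm hzx hzy⟩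
  have hsub : ({x, y} : Set X) ⊆ T.clade m := by
    rintro w (rfl | rfl)
    exacts [hmx, hmy]
  have hcard : (T.clade m \ {x, y}).ncard = (T.clade m).ncard - 2 := by
    rw [Set.ncard_diff hsub (Set.toFinite _), Set.ncard_pair hxy]
  have hle : 2 ≤ (T.clade m).ncard := by
    calc 2 = ({x, y} : Set X).ncard := (Set.ncard_pair hxy).symm
    _ ≤ _ := Set.ncard_le_ncard hsub (Set.toFinite _)
  rw [hset, hcard]
  omega
end

section
/- Let T be an unrooted binary phylogenetic tree on a finite taxon set X of size N, equipped with the quartet metrization, and let d_Q denote the induced tree metric on X. Then for all distinct x, y ∈ X, d_Q(x,y) = 2·|Q_{x,y}| + 2N − 4, where Q_{x,y} is the set of quartets displayed on T of the form xz|yw (i.e., quartets separating x and y). -/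
open Function

/-- An unrooted phylogenetic tree on taxon set `X`, with vertex set `V`: a tree whose
degree-one vertices (leaves) are bijectively labeled by the taxa, all other vertices
having degree at least 3. -/
structure UPhylo (X V : Type*) where
  G : SimpleGraph V
  isTree : G.IsTree
  leaf : X → V
  leaf_inj : Function.Injective leaf
  leaf_deg : ∀ x : X, (G.neighborSet (leaf x)).ncard = 1
  leaf_surj : ∀ v : V, (G.neighborSet v).ncard = 1 → ∃ x : X, leaf x = v
  internal_deg : ∀ v : V, (∀ x : X, leaf x ≠ v) → 3 ≤ (G.neighborSet v).ncard

variable {X V : Type*}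

/-- An unrooted phylogenetic tree is binary if every internal vertex has degree
exactly 3. -/
def UPhylo.IsBinary (T : UPhylo X V) : Prop :=
  ∀ v : V, (T.G.neighborSet v).ncard = 1 ∨ (T.G.neighborSet v).ncard = 3

/-- The set of taxa on the `u`-side of the edge `{u,v}`: those taxa whose leaf is still
connected to `u` after deleting the edge `{u,v}`. -/
def sideSet (G : SimpleGraph V) (leaf : X → V) (u v : V) : Set X :=
  {x | (G.deleteEdges {s(u, v)}).Reachable (leaf x) u}

/-- The tree displays the quartet `ab|cd`: some edge of the tree separates `{a,b}`
from `{c,d}` (equivalently, the induced 4-leaf tree has an internal edge separating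
`a,b` from `c,d`). -/
def DisplaysQuartet (G : SimpleGraph V) (leaf : X → V) (a b c d : X) : Prop :=
  ∃ u v : V, G.Adj u v ∧ a ∈ sideSet G leaf u v ∧ b ∈ sideSet G leaf u v ∧
    c ∈ sideSet G leaf v u ∧ d ∈ sideSet G leaf v u

/-- The tree displays the degenerate (star) quartet `abcd`: the induced 4-leaf tree on
`{a,b,c,d}` is unresolved, i.e. no pairing of the four taxa is separated by an edge. -/
def DisplaysStarQuartet (G : SimpleGraph V) (leaf : X → V) (a b c d : X) : Prop :=
  ¬ DisplaysQuartet G leaf a b c d ∧ ¬ DisplaysQuartet G leaf a c b d ∧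
    ¬ DisplaysQuartet G leaf a d b c

/-- The tree displays the split `A|B`: removing some edge partitions the taxa into
`A` and `B` according to the connected components. -/
def DisplaysSplit (G : SimpleGraph V) (leaf : X → V) (A B : Set X) : Prop :=
  ∃ u v : V, G.Adj u v ∧ A = sideSet G leaf u v ∧ B = sideSet G leaf v u

/-- Contribution at the endpoint `u` to the quartet-metrization weight of the edge
`{u,v}`: the sum `Σ_{i<i'} |X_i|·|X_{i'}|` over the branches `X_i` hanging off `u`
through the edges at `u` other than `{u,v}`. -/
noncomputable def halfW [Fintype X] [Fintype V] [DecidableEq V]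
    (G : SimpleGraph V) (leaf : X → V) (u v : V) : ℕ :=
  (∑ p ∈ ((G.neighborSet u \ {v}).toFinite.toFinset).offDiag,
      (sideSet G leaf p.1 u).ncard * (sideSet G leaf p.2 u).ncard) / 2

/-- The quartet-metrization weight of the edge `{u,v}`. For an internal edge of a
binary tree with quartet partition `X₁,X₂|X₃,X₄` this is `|X₁||X₂| + |X₃||X₄|`, and
for a pendant edge with tripartition `{x},X₁,X₂` at its internal end it is `|X₁||X₂|`. -/
noncomputable def wQ [Fintype X] [Fintype V] [DecidableEq V]
    (G : SimpleGraph V) (leaf : X → V) (u v : V) : ℕ :=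
  halfW G leaf u v + halfW G leaf v u

/-- The quartet-metrization weight, as a function on undirected edges. -/
noncomputable def wQe [Fintype X] [Fintype V] [DecidableEq V]
    (G : SimpleGraph V) (leaf : X → V) : Sym2 V → ℕ :=
  Sym2.lift ⟨fun u v => wQ G leaf u v, fun u v => by unfold wQ; exact Nat.add_comm _ _⟩




namespace QMhelp

open SimpleGraph

variable {V : Type*} [DecidableEq V] {G : SimpleGraph V}

/-- vertex-side predicate: `a` is reachable to `u` after deleting edge `{u,v}`. -/
def vs (G : SimpleGraph V) (u v a : V) : Prop :=
  (G.deleteEdges {s(u, v)}).Reachable a u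

lemma del_swap (u v : V) : G.deleteEdges {s(u, v)} = G.deleteEdges {s(v, u)} := by
  rw [Sym2.eq_swap]

lemma vs_self (u v : V) : vs G u v u := SimpleGraph.Reachable.refl u

lemma bridge (ht : G.IsTree) (h : G.Adj u v) :
    ¬ (G.deleteEdges {s(u, v)}).Reachable u v := by
  have hb : G.IsBridge s(u, v) :=
    (SimpleGraph.isAcyclic_iff_forall_adj_isBridge.mp ht.2) h
  rw [SimpleGraph.isBridge_iff] at hb
  exact hb

lemma not_vs_other (ht : G.IsTree) (h : G.Adj u v) : ¬ vs G u v v := by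
  intro hr
  exact bridge ht h (hr.symm)

lemma peel {u a v : V} {p : G.Walk u a} (hp : p.IsPath) (he : s(u, v) ∈ p.edges) :
    (G.deleteEdges {s(u, v)}).Reachable v a := by
  cases p with
  | nil => simp at he
  | cons h q =>
    rename_i b
    rw [SimpleGraph.Walk.cons_isPath_iff] at hp
    rw [SimpleGraph.Walk.edges_cons, List.mem_cons] at he
    rcases he with he | he
    · have hvb : v = b := Sym2.congr_right.mp he
      subst hvb
      have hnot : s(u, v) ∉ q.edges := fun hq => hp.2 (q.fst_mem_support_of_mem_edges hq)
      exact ⟨q.toDeleteEdge _ hnot⟩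
    · exact absurd (q.fst_mem_support_of_mem_edges he) hp.2

lemma edge_unique {u a v w : V} {p : G.Walk u a} (hp : p.IsPath)
    (hv : s(u, v) ∈ p.edges) (hw : s(u, w) ∈ p.edges) : v = w := by
  cases p with
  | nil => simp at hv
  | cons h q =>
    rename_i b
    rw [SimpleGraph.Walk.cons_isPath_iff] at hp
    rw [SimpleGraph.Walk.edges_cons, List.mem_cons] at hv hw
    have hv' : v = b := by
      rcases hv with hv | hv
      · exact Sym2.congr_right.mp hv
      · exact absurd (q.fst_mem_support_of_mem_edges hv) hp.2
    have hw' : w = b := by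
      rcases hw with hw | hw
      · exact Sym2.congr_right.mp hw
      · exact absurd (q.fst_mem_support_of_mem_edges hw) hp.2
    rw [hv', hw']

/-- get a path between two vertices of a connected graph -/
lemma exists_path (ht : G.IsTree) (a b : V) : ∃ q : G.Walk a b, q.IsPath := by
  obtain ⟨w⟩ := ht.isConnected.preconnected a b
  exact ⟨w.toPath.1, w.toPath.2⟩

/-- V5: if `a` is on the `p`-side of edge `{p,u}`, every walk from `a` to `u` uses that edge. -/
lemma edge_mem_of_vs (ht : G.IsTree) (h : G.Adj p u) (hvs : vs G p u a)
    (q : G.Walk a u) : s(p, u) ∈ q.edges := by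
  by_contra hne
  have : (G.deleteEdges {s(p, u)}).Reachable a u := ⟨q.toDeleteEdges _ (by
    intro e he; simp only [Set.mem_singleton_iff]; rintro rfl; exact hne he)⟩
  exact bridge ht h ((hvs.symm.trans this))

/-- V6: sides at a common vertex are disjoint. -/
lemma vs_unique (ht : G.IsTree) (hpu : G.Adj p u) (hp'u : G.Adj p' u)
    (h1 : vs G p u a) (h2 : vs G p' u a) : p = p' := by
  obtain ⟨q, hq⟩ := exists_path ht a u
  have e1 := edge_mem_of_vs ht hpu h1 q
  have e2 := edge_mem_of_vs ht hp'u h2 q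
  have e1' : s(u, p) ∈ q.reverse.edges := by
    rw [SimpleGraph.Walk.edges_reverse, List.mem_reverse, Sym2.eq_swap]; exact e1
  have e2' : s(u, p') ∈ q.reverse.edges := by
    rw [SimpleGraph.Walk.edges_reverse, List.mem_reverse, Sym2.eq_swap]; exact e2
  exact edge_unique hq.reverse e1' e2'

/-- V1: dichotomy. -/
lemma vs_dichotomy (ht : G.IsTree) (h : G.Adj u v) (a : V) :
    vs G u v a ∨ vs G v u a := by
  obtain ⟨q, hq⟩ := exists_path ht a u
  by_cases he : s(u, v) ∈ q.edges
  · right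
    have he' : s(u, v) ∈ q.reverse.edges := by
      rw [SimpleGraph.Walk.edges_reverse, List.mem_reverse]; exact he
    have := peel hq.reverse he'
    unfold vs
    rw [← del_swap]
    exact this.symm
  · left
    exact ⟨q.toDeleteEdges _ (by
      intro e hee; simp only [Set.mem_singleton_iff]; rintro rfl; exact he hee)⟩

/-- V2: exclusivity. -/
lemma vs_not_both (ht : G.IsTree) (h : G.Adj u v) (a : V) :
    ¬ (vs G u v a ∧ vs G v u a) := by
  rintro ⟨h1, h2⟩
  unfold vs at h2
  rw [← del_swap] at h2
  exact bridge ht h (h1.symm.trans h2)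

/-- V3: chain. -/
lemma vs_chain (ht : G.IsTree) (hpu : G.Adj p u) (huv : G.Adj u v) (hvp : v ≠ p)
    (hvs : vs G p u a) : vs G u v a := by
  obtain ⟨q, hq⟩ := exists_path ht a u
  have e1 := edge_mem_of_vs ht hpu hvs q
  have hne : s(u, v) ∉ q.edges := by
    intro he
    have e1' : s(u, p) ∈ q.reverse.edges := by
      rw [SimpleGraph.Walk.edges_reverse, List.mem_reverse, Sym2.eq_swap]; exact e1
    have e2' : s(u, v) ∈ q.reverse.edges := by
      rw [SimpleGraph.Walk.edges_reverse, List.mem_reverse]; exact he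
    exact hvp (edge_unique hq.reverse e2' e1')
  exact ⟨q.toDeleteEdges _ (by
    intro e hee; simp only [Set.mem_singleton_iff]; rintro rfl; exact hne hee)⟩

/-- V4: covering. -/
lemma vs_cover (ht : G.IsTree) (hau : a ≠ u) :
    ∃ w, G.Adj u w ∧ vs G w u a := by
  obtain ⟨q, hq⟩ := exists_path ht u a
  cases q with
  | nil => exact absurd rfl hau.symm
  | cons h q' =>
    rename_i b
    refine ⟨b, h, ?_⟩
    rw [SimpleGraph.Walk.cons_isPath_iff] at hq
    have hne : s(b, u) ∉ q'.edges := by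
      intro he
      exact hq.2 (q'.snd_mem_support_of_mem_edges he)
    exact SimpleGraph.Reachable.symm ⟨q'.toDeleteEdges _ (by
      intro e hee; simp only [Set.mem_singleton_iff]; rintro rfl; exact hne hee)⟩

end QMhelp

namespace QMhelp

open SimpleGraph Finset

variable {V : Type*} [DecidableEq V] {G : SimpleGraph V}

lemma sum_map_edges (f : Sym2 V → ℕ) {u v : V} (p : G.Walk u v) :
    (p.edges.map f).sum = ∑ i ∈ Finset.range p.length, f s(p.getVert i, p.getVert (i+1)) := by
  induction p with
  | nil => simp
  | cons h q ih =>
    rw [SimpleGraph.Walk.edges_cons, List.map_cons, List.sum_cons,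
        SimpleGraph.Walk.length_cons, Finset.sum_range_succ']
    simp only [SimpleGraph.Walk.getVert_cons_succ, SimpleGraph.Walk.getVert_zero, ih]
    omega

lemma edges_getVert {u v : V} {p : G.Walk u v} {e : Sym2 V} (he : e ∈ p.edges) :
    ∃ i, i < p.length ∧ e = s(p.getVert i, p.getVert (i+1)) := by
  induction p with
  | nil => simp at he
  | cons h q ih =>
    rw [SimpleGraph.Walk.edges_cons, List.mem_cons] at he
    rcases he with rfl | he
    · refine ⟨0, by simp, ?_⟩
      simp [SimpleGraph.Walk.getVert_cons_succ, SimpleGraph.Walk.getVert_zero]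
    · obtain ⟨i, hi, hei⟩ := ih he
      refine ⟨i+1, by simpa using hi, ?_⟩
      simpa [SimpleGraph.Walk.getVert_cons_succ] using hei

lemma path_getVert_inj {u v : V} {p : G.Walk u v} (hp : p.IsPath) :
    ∀ {i j}, i ≤ p.length → j ≤ p.length → p.getVert i = p.getVert j → i = j := by
  induction p with
  | nil => intro i j hi hj _; simp at hi hj; omega
  | cons h q ih =>
    intro i j hi hj hij
    rw [SimpleGraph.Walk.cons_isPath_iff] at hp
    match i, j with
    | 0, 0 => rfl
    | 0, j+1 =>
      exfalso
      apply hp.2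
      rw [SimpleGraph.Walk.mem_support_iff_exists_getVert]
      refine ⟨j, ?_, ?_⟩
      · simpa [SimpleGraph.Walk.getVert_cons_succ, SimpleGraph.Walk.getVert_zero] using hij.symm
      · simpa [SimpleGraph.Walk.length_cons] using hj
    | i+1, 0 =>
      exfalso
      apply hp.2
      rw [SimpleGraph.Walk.mem_support_iff_exists_getVert]
      refine ⟨i, ?_, ?_⟩
      · simpa [SimpleGraph.Walk.getVert_cons_succ, SimpleGraph.Walk.getVert_zero] using hij
      · simpa [SimpleGraph.Walk.length_cons] using hi
    | i+1, j+1 =>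
      have := ih hp.1 (i := i) (j := j) (by simpa [SimpleGraph.Walk.length_cons] using hi)
        (by simpa [SimpleGraph.Walk.length_cons] using hj)
        (by simpa [SimpleGraph.Walk.getVert_cons_succ] using hij)
      omega

lemma nat_boundary {P : ℕ → Prop} (h0 : P 0) : ∀ {n}, ¬ P n → ∃ t, t < n ∧ P t ∧ ¬ P (t+1) := by
  intro n
  induction n with
  | zero => intro hn; exact absurd h0 hn
  | succ m ih =>
    intro hn
    by_cases hm : P m
    · exact ⟨m, Nat.lt_succ_self m, hm, hn⟩
    · obtain ⟨t, ht, h1, h2⟩ := ih hm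
      exact ⟨t, by omega, h1, h2⟩

lemma exists_third {α : Type*} {s : Set α} (hfin : s.Finite) (h3 : s.ncard = 3)
    {a b : α} (ha : a ∈ s) (hb : b ∈ s) (hab : a ≠ b) :
    ∃ r, r ∈ s ∧ r ≠ a ∧ r ≠ b ∧ s = {a, b, r} := by
  have hsub : ({a, b} : Set α) ⊆ s := by
    intro z hz
    rcases hz with rfl | rfl
    · exact ha
    · exact hb
  have hd : (s \ {a, b}).ncard = 1 := by
    rw [Set.ncard_diff hsub (Set.toFinite _), Set.ncard_pair hab, h3]
  obtain ⟨r, hr⟩ := Set.ncard_eq_one.mp hd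
  have hrm : r ∈ s \ ({a, b} : Set α) := by rw [hr]; exact rfl
  refine ⟨r, hrm.1, ?_, ?_, ?_⟩
  · intro h; exact hrm.2 (by simp [h])
  · intro h; exact hrm.2 (by simp [h])
  · have := Set.union_diff_cancel hsub
    rw [hr] at this
    rw [← this]
    ext z
    simp only [Set.mem_union, Set.mem_insert_iff, Set.mem_singleton_iff]
    tauto

lemma sq_sum_aux (r : Finset ℕ) (f : ℕ → ℕ) :
    (∑ t ∈ r, f t) * (∑ t ∈ r, f t) =
      2 * ∑ q ∈ (r ×ˢ r).filter (fun q => q.1 < q.2), f q.1 * f q.2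
        + ∑ t ∈ r, f t * f t := by
  rw [Finset.sum_mul_sum, ← Finset.sum_product']
  rw [← Finset.sum_filter_add_sum_filter_not (r ×ˢ r) (fun q => q.1 < q.2)
    (fun q => f q.1 * f q.2)]
  have hdiag : ∑ q ∈ ((r ×ˢ r).filter (fun q => ¬ q.1 < q.2)).filter
      (fun q => ¬ q.1 ≠ q.2), f q.1 * f q.2 = ∑ t ∈ r, f t * f t := by
    apply Finset.sum_nbij' (fun q => q.1) (fun t => (t, t))
    · intro q hq
      simp only [Finset.mem_filter, Finset.mem_product] at hq
      exact hq.1.1.1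
    · intro t htm
      simp only [Finset.mem_filter, Finset.mem_product]
      exact ⟨⟨⟨htm, htm⟩, by omega⟩, by simp⟩
    · intro q hq
      simp only [Finset.mem_filter, Finset.mem_product, not_not] at hq
      exact Prod.ext rfl hq.2
    · intro t _; rfl
    · intro q hq
      simp only [Finset.mem_filter, Finset.mem_product, not_not] at hq
      rw [← hq.2]
  have hgt : ∑ q ∈ ((r ×ˢ r).filter (fun q => ¬ q.1 < q.2)).filter
      (fun q => q.1 ≠ q.2), f q.1 * f q.2
      = ∑ q ∈ (r ×ˢ r).filter (fun q => q.1 < q.2), f q.1 * f q.2 := by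
    apply Finset.sum_nbij' (fun q => (q.2, q.1)) (fun q => (q.2, q.1))
    · intro q hq
      simp only [Finset.mem_filter, Finset.mem_product] at hq ⊢
      refine ⟨⟨hq.1.1.2, hq.1.1.1⟩, ?_⟩
      have := hq.1.2
      have := hq.2
      omega
    · intro q hq
      simp only [Finset.mem_filter, Finset.mem_product] at hq ⊢
      exact ⟨⟨⟨hq.1.2, hq.1.1⟩, by omega⟩, by omega⟩
    · intro q _; rfl
    · intro q _; rfl
    · intro q _; exact Nat.mul_comm _ _
  rw [← Finset.sum_filter_add_sum_filter_not ((r ×ˢ r).filter (fun q => ¬ q.1 < q.2))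
    (fun q => q.1 ≠ q.2) (fun q => f q.1 * f q.2), hdiag, hgt]
  ring

end QMhelp

namespace QMhelp

lemma offDiag_pair {α : Type*} [DecidableEq α] {a b : α} (h : a ≠ b) :
    ({a, b} : Finset α).offDiag = {(a, b), (b, a)} := by
  ext q
  simp only [Finset.mem_offDiag, Finset.mem_insert, Finset.mem_singleton, Prod.ext_iff]
  constructor
  · rintro ⟨h1 | h1, h2 | h2, hne⟩
    · exact absurd (h1.trans h2.symm) hne
    · exact Or.inl ⟨h1, h2⟩
    · exact Or.inr ⟨h1, h2⟩
    · exact absurd (h1.trans h2.symm) hne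
  · rintro (⟨h1, h2⟩ | ⟨h1, h2⟩)
    · exact ⟨Or.inl h1, Or.inr h2, by rw [h1, h2]; exact h⟩
    · exact ⟨Or.inr h1, Or.inl h2, by rw [h1, h2]; exact h.symm⟩

lemma halfW_empty {X V : Type*} [Fintype X] [Fintype V] [DecidableEq V]
    (G : SimpleGraph V) (leaf : X → V) (u v : V) (h : G.neighborSet u \ {v} = ∅) :
    halfW G leaf u v = 0 := by
  have hfs : (G.neighborSet u \ {v}).toFinite.toFinset = (∅ : Finset V) :=
    Set.Finite.toFinset_eq_empty.mpr h
  unfold halfW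
  rw [hfs]
  simp

lemma halfW_pair {X V : Type*} [Fintype X] [Fintype V] [DecidableEq V]
    (G : SimpleGraph V) (leaf : X → V) (u v a c : V) (hac : a ≠ c)
    (h : G.neighborSet u \ {v} = {a, c}) :
    halfW G leaf u v = (sideSet G leaf a u).ncard * (sideSet G leaf c u).ncard := by
  have hfs : (G.neighborSet u \ {v}).toFinite.toFinset = ({a, c} : Finset V) := by
    ext w
    rw [Set.Finite.mem_toFinset, h]
    simp only [Set.mem_insert_iff, Set.mem_singleton_iff, Finset.mem_insert,
      Finset.mem_singleton]
  unfold halfW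
  rw [hfs, offDiag_pair hac, Finset.sum_pair (by
    intro hq
    rw [Prod.ext_iff] at hq
    exact hac hq.1)]
  dsimp only
  have : (sideSet G leaf a u).ncard * (sideSet G leaf c u).ncard
      + (sideSet G leaf c u).ncard * (sideSet G leaf a u).ncard
      = 2 * ((sideSet G leaf a u).ncard * (sideSet G leaf c u).ncard) := by ring
  rw [this]
  exact Nat.mul_div_cancel_left _ (by norm_num)

end QMhelp

open QMhelp in
/-- **Theorem (quartet metrization).** For an unrooted binary phylogenetic tree `T` on
`X` with `|X| = N`, equipped with the quartet metrization, and distinct taxa `x ≠ y`,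
the tree-metric distance `d_Q(x,y)` (the sum of the edge weights along the path between
the leaves `x` and `y`) equals `2·|Q_{x,y}| + 2N - 4`, where `Q_{x,y}` is the set of
quartets displayed on `T` of the form `xz|yw` (each such quartet being determined by
the ordered pair `(z,w)` of partners of `x` and of `y`). -/
theorem quartet_metrization_distance
    {X V : Type*} [Fintype X] [Fintype V] [DecidableEq V]
    (T : UPhylo X V) (hbin : T.IsBinary)
    (x y : X) (hxy : x ≠ y)
    (p : T.G.Walk (T.leaf x) (T.leaf y)) (hp : p.IsPath) :
    (p.edges.map (wQe T.G T.leaf)).sum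
      = 2 * ({zw : X × X | zw.1 ≠ zw.2 ∧ zw.1 ≠ x ∧ zw.1 ≠ y ∧ zw.2 ≠ x ∧ zw.2 ≠ y ∧
          DisplaysQuartet T.G T.leaf x zw.1 y zw.2} : Set (X × X)).ncard
        + 2 * Fintype.card X - 4 := by
  classical
  obtain ⟨G, ht, L, hLinj, hLdeg, hLsurj, hIdeg⟩ := T
  simp only [UPhylo.IsBinary] at hbin
  dsimp only at hbin p hp ⊢
  -- basic path data
  have hne : L x ≠ L y := fun h => hxy (hLinj h)
  obtain ⟨k', hk'⟩ : ∃ k', p.length = k' + 1 := by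
    cases hL : p.length with
    | zero => exact absurd (SimpleGraph.Walk.eq_of_length_eq_zero hL) hne
    | succ n => exact ⟨n, rfl⟩
  set vv : ℕ → V := p.getVert with hvv
  have hvx : vv 0 = L x := p.getVert_zero
  have hvy : vv (k'+1) = L y := by
    rw [hvv, ← hk']; exact p.getVert_length
  have hadj : ∀ {i : ℕ}, i ≤ k' → G.Adj (vv i) (vv (i+1)) := by
    intro i hi
    exact p.adj_getVert_succ (by omega)
  have hinj : ∀ {i j : ℕ}, i ≤ k'+1 → j ≤ k'+1 → vv i = vv j → i = j := by
    intro i j hi hj hij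
    exact path_getVert_inj hp (by omega) (by omega) hij
  -- side sets along the path
  let S : ℕ → ℕ → Set X := fun a b => sideSet G L (vv a) (vv b)
  have hSmem : ∀ a b (z : X), z ∈ S a b ↔ vs G (vv a) (vv b) (L z) := fun _ _ _ => Iff.rfl
  have hex : ∀ a b, G.Adj (vv a) (vv b) → ∀ z : X, z ∈ S a b → z ∈ S b a → False := by
    intro a b hab z h1 h2
    exact vs_not_both ht hab (L z) ⟨h1, h2⟩
  have hchain : ∀ a b c, G.Adj (vv a) (vv b) → G.Adj (vv b) (vv c) → vv c ≠ vv a →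
      ∀ z : X, z ∈ S a b → z ∈ S b c := by
    intro a b c hab hbc hca z hz
    exact vs_chain ht hab hbc hca hz
  have hdi : ∀ i, i ≤ k' → ∀ z : X, z ∈ S i (i+1) ∨ z ∈ S (i+1) i := by
    intro i hi z
    exact vs_dichotomy ht (hadj hi) (L z)
  -- monotone chains
  have hup : ∀ (z : X) (m m' : ℕ), m ≤ m' → m' ≤ k' → z ∈ S m (m+1) → z ∈ S m' (m'+1) := by
    intro z m m' hmm' hm'
    induction m', hmm' using Nat.le_induction with
    | base => exact fun h => h
    | succ n hn ih =>
      intro hz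
      have h1 := ih (by omega) hz
      refine hchain n (n+1) (n+2) (hadj (by omega)) (hadj (by omega)) ?_ z h1
      intro hcc
      have := hinj (by omega) (by omega) hcc
      omega
  have hdn0 : ∀ (z : X) (d m : ℕ), m + d ≤ k' → z ∈ S (m+d+1) (m+d) → z ∈ S (m+1) m := by
    intro z d
    induction d with
    | zero => intro m _ h; simpa using h
    | succ n ih =>
      intro m hm hz
      have h1 : z ∈ S (m+n+2) (m+n+1) := by
        have : m + (n+1) + 1 = m + n + 2 := by omega
        rw [this] at hz
        have : m + (n+1) = m + n + 1 := by omega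
        rwa [this] at hz
      have h2 : z ∈ S (m+n+1) (m+n) := by
        refine hchain (m+n+2) (m+n+1) (m+n) (hadj (by omega)).symm (hadj (by omega)).symm ?_ z h1
        intro hcc
        have := hinj (by omega) (by omega) hcc
        omega
      exact ih m (by omega) h2
  have hdn : ∀ (z : X) (m m' : ℕ), m ≤ m' → m' ≤ k' → z ∈ S (m'+1) m' → z ∈ S (m+1) m := by
    intro z m m' hmm' hm' hz
    have : m + (m' - m) = m' := by omega
    refine hdn0 z (m' - m) m (by omega) ?_
    rw [this]
    exact hz
  -- endpoints
  have hX0 : ∀ m, m ≤ k' → x ∈ S m (m+1) := by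
    intro m hm
    refine hup x 0 m (by omega) hm ?_
    show vs G (vv 0) (vv 1) (L x)
    rw [hvx.symm]  -- bleh
    exact SimpleGraph.Reachable.refl _
  have hYk : ∀ m, m ≤ k' → y ∈ S (m+1) m := by
    intro m hm
    refine hdn y m k' hm le_rfl ?_
    show vs G (vv (k'+1)) (vv k') (L y)
    rw [← hvy]
    exact SimpleGraph.Reachable.refl _
  -- leaf-end side sets
  have hnb0 : G.neighborSet (vv 0) = {vv 1} := by
    have hd1 : (G.neighborSet (vv 0)).ncard = 1 := by rw [hvx]; exact hLdeg x
    obtain ⟨a, ha⟩ := Set.ncard_eq_one.mp hd1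
    have h1 : vv 1 ∈ G.neighborSet (vv 0) := hadj (Nat.zero_le _)
    rw [ha] at h1 ⊢
    rw [Set.mem_singleton_iff] at h1
    rw [h1]
  have hnbk : G.neighborSet (vv (k'+1)) = {vv k'} := by
    have hd1 : (G.neighborSet (vv (k'+1))).ncard = 1 := by rw [hvy]; exact hLdeg y
    obtain ⟨a, ha⟩ := Set.ncard_eq_one.mp hd1
    have h1 : vv k' ∈ G.neighborSet (vv (k'+1)) := (hadj le_rfl).symm
    rw [ha] at h1 ⊢
    rw [Set.mem_singleton_iff] at h1
    rw [h1]
  have hS01 : S 0 1 = {x} := by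
    ext z
    simp only [Set.mem_singleton_iff]
    constructor
    · intro hz
      by_cases hzx : L z = vv 0
      · exact hLinj (by rw [hzx, hvx])
      · exfalso
        obtain ⟨w, hw, hvsw⟩ := vs_cover ht hzx
        have hwv : w = vv 1 := by
          have : w ∈ G.neighborSet (vv 0) := hw
          rwa [hnb0, Set.mem_singleton_iff] at this
        rw [hwv] at hvsw
        exact hex 0 1 (hadj (Nat.zero_le _)) z hz hvsw
    · intro h
      rw [h]
      show vs G (vv 0) (vv 1) (L x)
      rw [hvx.symm]
      exact SimpleGraph.Reachable.refl _
  have hSk1 : S (k'+1) k' = {y} := by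
    ext z
    simp only [Set.mem_singleton_iff]
    constructor
    · intro hz
      by_cases hzy : L z = vv (k'+1)
      · exact hLinj (by rw [hzy, hvy])
      · exfalso
        obtain ⟨w, hw, hvsw⟩ := vs_cover ht hzy
        have hwv : w = vv k' := by
          have : w ∈ G.neighborSet (vv (k'+1)) := hw
          rwa [hnbk, Set.mem_singleton_iff] at this
        rw [hwv] at hvsw
        exact hex (k'+1) k' (hadj le_rfl).symm z hz hvsw
    · intro h
      rw [h]
      show vs G (vv (k'+1)) (vv k') (L y)
      rw [← hvy]
      exact SimpleGraph.Reachable.refl _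
  -- branches
  let B : ℕ → Set X := fun t => S (t+1) (t+2) ∩ S (t+1) t
  have hcov : ∀ z : X, z ≠ x → z ≠ y → ∃ t, t < k' ∧ z ∈ B t := by
    intro z hzx hzy
    have h0 : z ∈ S 1 0 := by
      rcases hdi 0 (Nat.zero_le _) z with h | h
      · exfalso; rw [hS01] at h; exact hzx h
      · exact h
    have hlast : ¬ z ∈ S (k'+1) k' := by
      rw [hSk1]; exact hzy
    obtain ⟨t, htk, h1, h2⟩ := nat_boundary (P := fun i => z ∈ S (i+1) i) h0 hlast
    refine ⟨t, htk, ?_, h1⟩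
    rcases hdi (t+1) (by omega) z with h | h
    · exact h
    · exact absurd h h2
  have hBx : ∀ t, t < k' → ∀ z : X, z ∈ B t → z ≠ x := by
    intro t htk z hz h
    rw [h] at hz
    exact hex (t+1) t (hadj (by omega)).symm x hz.2 (hX0 t (by omega))
  have hBy : ∀ t, t < k' → ∀ z : X, z ∈ B t → z ≠ y := by
    intro t htk z hz h
    rw [h] at hz
    exact hex (t+1) (t+2) (hadj (by omega)) y hz.1 (hYk (t+1) (by omega))
  have hBB : ∀ s t, s < t → t < k' → ∀ z : X, z ∈ B s → z ∈ B t → False := by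
    intro s t hst htk z h1 h2
    have hz2 : z ∈ S (s+2) (s+1) := hdn z (s+1) t (by omega) (by omega) h2.2
    exact hex (s+1) (s+2) (hadj (by omega)) z h1.1 hz2
  -- internal vertex structure
  have hdeg3 : ∀ t, t < k' → (G.neighborSet (vv (t+1))).ncard = 3 := by
    intro t htk
    rcases hbin (vv (t+1)) with h1 | h3
    · exfalso
      obtain ⟨a, ha⟩ := Set.ncard_eq_one.mp h1
      have m1 : vv t ∈ G.neighborSet (vv (t+1)) := (hadj (by omega)).symm
      have m2 : vv (t+2) ∈ G.neighborSet (vv (t+1)) := hadj (by omega)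
      rw [ha, Set.mem_singleton_iff] at m1 m2
      have : vv t = vv (t+2) := by rw [m1, m2]
      have := hinj (by omega) (by omega) this
      omega
    · exact h3
  have hint : ∀ t, t < k' → ∀ z : X, L z ≠ vv (t+1) := by
    intro t htk z h
    have := hLdeg z
    rw [h, hdeg3 t htk] at this
    omega
  have hthird : ∀ t, t < k' → ∃ r, G.Adj (vv (t+1)) r ∧ r ≠ vv t ∧ r ≠ vv (t+2) ∧
      G.neighborSet (vv (t+1)) = {vv t, vv (t+2), r} ∧ B t = sideSet G L r (vv (t+1)) := by
    intro t htk
    have m1 : vv t ∈ G.neighborSet (vv (t+1)) := (hadj (by omega)).symm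
    have m2 : vv (t+2) ∈ G.neighborSet (vv (t+1)) := hadj (by omega)
    have hne12 : vv t ≠ vv (t+2) := by
      intro h
      have := hinj (by omega) (by omega) h
      omega
    obtain ⟨r, hrm, hr1, hr2, hset⟩ := exists_third (Set.toFinite _) (hdeg3 t htk) m1 m2 hne12
    have hradj : G.Adj (vv (t+1)) r := hrm
    refine ⟨r, hradj, hr1, hr2, hset, ?_⟩
    ext z
    constructor
    · intro hz
      have hzn : L z ≠ vv (t+1) := hint t htk z
      obtain ⟨w, hw, hvsw⟩ := vs_cover ht hzn
      have hwm : w ∈ G.neighborSet (vv (t+1)) := hw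
      rw [hset] at hwm
      rcases hwm with h | h | h
      · exfalso
        rw [h] at hvsw
        exact hex t (t+1) (hadj (by omega)) z hvsw hz.2
      · exfalso
        rw [h] at hvsw
        exact hex (t+2) (t+1) (hadj (by omega)).symm z hvsw hz.1
      · rw [h] at hvsw
        exact hvsw
    · intro hz
      have hz' : vs G r (vv (t+1)) (L z) := hz
      constructor
      · exact vs_chain ht hradj.symm (hadj (by omega)) (fun h => hr2 h.symm) hz'
      · exact vs_chain ht hradj.symm (hadj (by omega)).symm (fun h => hr1 h.symm) hz'
  -- halfW at the leaf ends
  have hhw0 : halfW G L (vv 0) (vv 1) = 0 := by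
    refine halfW_empty G L _ _ ?_
    rw [hnb0]
    simp
  have hhwk : halfW G L (vv (k'+1)) (vv k') = 0 := by
    refine halfW_empty G L _ _ ?_
    rw [hnbk]
    simp
  -- halfW at internal vertices, and vertex partition
  have hkey : ∀ t, t < k' →
      halfW G L (vv (t+1)) (vv (t+2)) = (S t (t+1)).ncard * (B t).ncard ∧
      halfW G L (vv (t+1)) (vv t) = (S (t+2) (t+1)).ncard * (B t).ncard ∧
      (S t (t+1)).ncard + (S (t+2) (t+1)).ncard + (B t).ncard = Fintype.card X := by
    intro t htk
    obtain ⟨r, hradj, hr1, hr2, hset, hBt⟩ := hthird t htk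
    have hne12 : vv t ≠ vv (t+2) := by
      intro h
      have := hinj (by omega) (by omega) h
      omega
    have hfwd : halfW G L (vv (t+1)) (vv (t+2)) = (S t (t+1)).ncard * (B t).ncard := by
      have hd : G.neighborSet (vv (t+1)) \ {vv (t+2)} = ({vv t, r} : Set V) := by
        rw [hset]
        ext w
        simp only [Set.mem_diff, Set.mem_insert_iff, Set.mem_singleton_iff]
        constructor
        · rintro ⟨rfl | rfl | rfl, h2⟩
          · exact Or.inl rfl
          · exact absurd rfl h2
          · exact Or.inr rfl
        · rintro (rfl | rfl)
          · exact ⟨Or.inl rfl, hne12⟩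
          · exact ⟨Or.inr (Or.inr rfl), hr2⟩
      rw [halfW_pair G L _ _ _ _ (fun h => hr1 h.symm) hd, ← hBt]
    have hbwd : halfW G L (vv (t+1)) (vv t) = (S (t+2) (t+1)).ncard * (B t).ncard := by
      have hd : G.neighborSet (vv (t+1)) \ {vv t} = ({vv (t+2), r} : Set V) := by
        rw [hset]
        ext w
        simp only [Set.mem_diff, Set.mem_insert_iff, Set.mem_singleton_iff]
        constructor
        · rintro ⟨rfl | rfl | rfl, h2⟩
          · exact absurd rfl h2
          · exact Or.inl rfl
          · exact Or.inr rfl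
        · rintro (rfl | rfl)
          · exact ⟨Or.inr (Or.inl rfl), fun h => hne12 h.symm⟩
          · exact ⟨Or.inr (Or.inr rfl), hr1⟩
      rw [halfW_pair G L _ _ _ _ (fun h => hr2 h.symm) hd, ← hBt]
    have hpart : (S t (t+1)).ncard + (S (t+2) (t+1)).ncard + (B t).ncard = Fintype.card X := by
      have hcover : S t (t+1) ∪ (S (t+2) (t+1) ∪ B t) = Set.univ := by
        ext z
        simp only [Set.mem_univ, iff_true, Set.mem_union]
        obtain ⟨w, hw, hvsw⟩ := vs_cover ht (hint t htk z)
        have hwm : w ∈ G.neighborSet (vv (t+1)) := hw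
        rw [hset] at hwm
        rcases hwm with h | h | h
        · left; rw [h] at hvsw; exact hvsw
        · right; left; rw [h] at hvsw; exact hvsw
        · right; right; rw [hBt]; rw [h] at hvsw; exact hvsw
      have hd1 : Disjoint (S (t+2) (t+1)) (B t) := by
        rw [Set.disjoint_left]
        intro z h1 h2
        rw [hBt] at h2
        exact hr2 (vs_unique ht (hadj (show t+1 ≤ k' by omega)).symm hradj.symm h1 h2).symm
      have hd2 : Disjoint (S t (t+1)) (S (t+2) (t+1) ∪ B t) := by
        rw [Set.disjoint_left]
        intro z h1 h2
        rcases h2 with h2 | h2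
        · exact hne12 (vs_unique ht (hadj (show t ≤ k' by omega)) (hadj (show t+1 ≤ k' by omega)).symm h1 h2)
        · rw [hBt] at h2
          exact hr1 (vs_unique ht (hadj (show t ≤ k' by omega)) hradj.symm h1 h2).symm
      have hcard := Set.ncard_univ X
      rw [Nat.card_eq_fintype_card] at hcard
      rw [← hcover, Set.ncard_union_eq hd2 (Set.toFinite _) (Set.toFinite _),
        Set.ncard_union_eq hd1 (Set.toFinite _) (Set.toFinite _)] at hcard
      rw [← hcard]
      ring
    exact ⟨hfwd, hbwd, hpart⟩
  -- quartet characterization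
  have hchar : ∀ z w : X,
      (z ≠ w ∧ z ≠ x ∧ z ≠ y ∧ w ≠ x ∧ w ≠ y ∧ DisplaysQuartet G L x z y w) ↔
      ∃ s t, s < t ∧ t < k' ∧ z ∈ B s ∧ w ∈ B t := by
    intro z w
    constructor
    · rintro ⟨hzw, hzx, hzy, hwx, hwy, u, v, huv, hxu, hzu, hyv, hwv⟩
      obtain ⟨s, hsk, hzB⟩ := hcov z hzx hzy
      obtain ⟨t, htk, hwB⟩ := hcov w hwx hwy
      have hmem : s(u, v) ∈ p.edges := by
        by_contra hne2
        have hreach : (G.deleteEdges {s(u, v)}).Reachable (L x) (L y) :=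
          ⟨p.toDeleteEdges _ (by
            intro e he
            simp only [Set.mem_singleton_iff]
            rintro rfl
            exact hne2 he)⟩
        have hxu' : (G.deleteEdges {s(u, v)}).Reachable (L x) u := hxu
        have hyv' : (G.deleteEdges {s(u, v)}).Reachable (L y) v := by
          have h0 : (G.deleteEdges {s(v, u)}).Reachable (L y) v := hyv
          rwa [← del_swap] at h0
        exact bridge ht huv (hxu'.symm.trans (hreach.trans hyv'))
      obtain ⟨m, hm, hme⟩ := edges_getVert hmem
      rw [hk'] at hm
      have hm' : m ≤ k' := by omega
      rcases Sym2.eq_iff.mp hme with ⟨hu, hv⟩ | ⟨hu, hv⟩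
      · have hzu' : z ∈ S m (m+1) := by rw [hu, hv] at hzu; exact hzu
        have hwv' : w ∈ S (m+1) m := by rw [hu, hv] at hwv; exact hwv
        have hsm : s < m := by
          by_contra hsm
          push_neg at hsm
          have h1 : z ∈ S (m+1) m := hdn z m s hsm (by omega) hzB.2
          exact hex m (m+1) (hadj hm') z hzu' h1
        have htm : m ≤ t := by
          by_contra htm
          push_neg at htm
          have h1 : w ∈ S m (m+1) := hup w (t+1) m htm hm' hwB.1
          exact hex m (m+1) (hadj hm') w h1 hwv'
        exact ⟨s, t, by omega, htk, hzB, hwB⟩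
      · exfalso
        have h1 : x ∈ S (m+1) m := by rw [hu, hv] at hxu; exact hxu
        exact hex m (m+1) (hadj hm') x (hX0 m hm') h1
    · rintro ⟨s, t, hst, htk, hzB, hwB⟩
      have hsk : s < k' := by omega
      have hs1k : s + 1 ≤ k' := by omega
      refine ⟨?_, hBx s hsk z hzB, hBy s hsk z hzB, hBx t htk w hwB, hBy t htk w hwB, ?_⟩
      · intro h
        exact hBB s t hst htk z hzB (h ▸ hwB)
      · refine ⟨vv (s+1), vv (s+2), hadj hs1k, hX0 (s+1) hs1k, hzB.1, hYk (s+1) hs1k, ?_⟩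
        exact hdn w (s+1) t (by omega) (by omega) hwB.2
  -- finset versions
  let Bf : ℕ → Finset X := fun t => (Set.toFinite (B t)).toFinset
  have hBfmem : ∀ t (z : X), z ∈ Bf t ↔ z ∈ B t := fun t z => Set.Finite.mem_toFinset _
  have hBfcard : ∀ t, (Bf t).card = (B t).ncard :=
    fun t => (Set.ncard_eq_toFinset_card (B t) _).symm
  have hNcard : Fintype.card X = 2 + ∑ t ∈ Finset.range k', (B t).ncard := by
    have huniv : (Finset.univ : Finset X)
        = insert x (insert y ((Finset.range k').biUnion Bf)) := by
      ext z
      simp only [Finset.mem_univ, true_iff, Finset.mem_insert, Finset.mem_biUnion,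
        Finset.mem_range]
      by_cases hzx : z = x
      · exact Or.inl hzx
      by_cases hzy : z = y
      · exact Or.inr (Or.inl hzy)
      obtain ⟨t, htk, hB⟩ := hcov z hzx hzy
      exact Or.inr (Or.inr ⟨t, htk, (hBfmem t z).mpr hB⟩)
    have hdisj : ∀ a ∈ Finset.range k', ∀ b ∈ Finset.range k', a ≠ b →
        Disjoint (Bf a) (Bf b) := by
      intro a ha b hb hab
      rw [Finset.disjoint_left]
      intro z hza hzb
      rw [Finset.mem_range] at ha hb
      rw [hBfmem] at hza hzb
      rcases Nat.lt_or_ge a b with h | h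
      · exact hBB a b h hb z hza hzb
      · exact hBB b a (by omega) ha z hzb hza
    have hxny : x ∉ insert y ((Finset.range k').biUnion Bf) := by
      simp only [Finset.mem_insert, Finset.mem_biUnion, Finset.mem_range]
      push_neg
      exact ⟨hxy, fun t htk h => hBx t htk x ((hBfmem t x).mp h) rfl⟩
    have hyn : y ∉ (Finset.range k').biUnion Bf := by
      simp only [Finset.mem_biUnion, Finset.mem_range]
      push_neg
      exact fun t htk h => hBy t htk y ((hBfmem t y).mp h) rfl
    rw [← Finset.card_univ, huniv, Finset.card_insert_of_notMem hxny,
      Finset.card_insert_of_notMem hyn, Finset.card_biUnion hdisj,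
      Finset.sum_congr rfl (fun t _ => hBfcard t)]
    omega
  -- the quartet finset
  let Pf : Finset (ℕ × ℕ) := (Finset.range k' ×ˢ Finset.range k').filter (fun q => q.1 < q.2)
  let Qf : Finset (X × X) := Pf.biUnion (fun q => Bf q.1 ×ˢ Bf q.2)
  have hQset : {zw : X × X | zw.1 ≠ zw.2 ∧ zw.1 ≠ x ∧ zw.1 ≠ y ∧ zw.2 ≠ x ∧ zw.2 ≠ y ∧
      DisplaysQuartet G L x zw.1 y zw.2} = ↑Qf := by
    ext zw
    have hch := hchar zw.1 zw.2
    rw [Set.mem_setOf_eq, Finset.mem_coe, Finset.mem_biUnion, hch]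
    constructor
    · rintro ⟨s, t, hst, htk, h1, h2⟩
      exact ⟨(s, t), Finset.mem_filter.mpr ⟨Finset.mem_product.mpr
        ⟨Finset.mem_range.mpr (by omega), Finset.mem_range.mpr htk⟩, hst⟩,
        Finset.mem_product.mpr ⟨(hBfmem _ _).mpr h1, (hBfmem _ _).mpr h2⟩⟩
    · rintro ⟨q, hq, hmemq⟩
      rw [Finset.mem_filter, Finset.mem_product, Finset.mem_range, Finset.mem_range] at hq
      rw [Finset.mem_product] at hmemq
      exact ⟨q.1, q.2, hq.2, hq.1.2, (hBfmem _ _).mp hmemq.1, (hBfmem _ _).mp hmemq.2⟩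
  have hQcard : Qf.card = ∑ q ∈ Pf, (B q.1).ncard * (B q.2).ncard := by
    rw [Finset.card_biUnion]
    · exact Finset.sum_congr rfl (fun q hq => by rw [Finset.card_product, hBfcard, hBfcard])
    · intro q1 h1 q2 h2 hne2
      rw [Function.onFun, Finset.disjoint_left]
      rw [Finset.mem_coe] at h1 h2
      rintro ⟨z, w⟩ hm1 hm2
      rw [Finset.mem_product] at hm1 hm2
      rw [Finset.mem_filter, Finset.mem_product, Finset.mem_range, Finset.mem_range] at h1 h2
      by_cases hq1 : q1.1 = q2.1
      · have hq2 : q1.2 ≠ q2.2 := fun h => hne2 (Prod.ext hq1 h)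
        have ha1 := (hBfmem _ _).mp hm1.2
        have ha2 := (hBfmem _ _).mp hm2.2
        rcases Nat.lt_or_ge q1.2 q2.2 with h | h
        · exact hBB _ _ h h2.1.2 w ha1 ha2
        · exact hBB _ _ (by omega) h1.1.2 w ha2 ha1
      · have ha1 := (hBfmem _ _).mp hm1.1
        have ha2 := (hBfmem _ _).mp hm2.1
        rcases Nat.lt_or_ge q1.1 q2.1 with h | h
        · exact hBB _ _ h h2.1.1 z ha1 ha2
        · exact hBB _ _ (by omega) h1.1.1 z ha2 ha1
  -- assemble
  rw [hQset, Set.ncard_coe_finset, hQcard]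
  rw [sum_map_edges (wQe G L) p, ← hvv, hk']
  have hwqe : ∀ i : ℕ, wQe G L s(vv i, vv (i+1))
      = halfW G L (vv i) (vv (i+1)) + halfW G L (vv (i+1)) (vv i) := fun i => rfl
  have hsum1 : ∑ i ∈ Finset.range (k'+1), wQe G L s(vv i, vv (i+1))
      = ∑ t ∈ Finset.range k', (S t (t+1)).ncard * (B t).ncard
        + ∑ t ∈ Finset.range k', (S (t+2) (t+1)).ncard * (B t).ncard := by
    simp only [hwqe]
    rw [Finset.sum_add_distrib]
    congr 1
    · rw [Finset.sum_range_succ', hhw0, Nat.add_zero]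
      exact Finset.sum_congr rfl (fun t htm => (hkey t (Finset.mem_range.mp htm)).1)
    · rw [Finset.sum_range_succ, hhwk, Nat.add_zero]
      exact Finset.sum_congr rfl (fun t htm => (hkey t (Finset.mem_range.mp htm)).2.1)
  rw [hsum1]
  have hble : ∀ t, t < k' → (B t).ncard ≤ ∑ t ∈ Finset.range k', (B t).ncard :=
    fun t htk => Finset.single_le_sum (f := fun s => (B s).ncard) (fun _ _ => Nat.zero_le _) (Finset.mem_range.mpr htk)
  have hterm : ∀ t ∈ Finset.range k',
      (S t (t+1)).ncard * (B t).ncard + (S (t+2) (t+1)).ncard * (B t).ncard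
      = ((∑ s ∈ Finset.range k', (B s).ncard) - (B t).ncard) * (B t).ncard
        + 2 * (B t).ncard := by
    intro t htm
    have htk := Finset.mem_range.mp htm
    have hk1 := (hkey t htk).2.2
    have hb := hble t htk
    have e1 : (S t (t+1)).ncard + (S (t+2) (t+1)).ncard
        = ((∑ s ∈ Finset.range k', (B s).ncard) - (B t).ncard) + 2 := by omega
    calc (S t (t+1)).ncard * (B t).ncard + (S (t+2) (t+1)).ncard * (B t).ncard
        = ((S t (t+1)).ncard + (S (t+2) (t+1)).ncard) * (B t).ncard := by ring
      _ = (((∑ s ∈ Finset.range k', (B s).ncard) - (B t).ncard) + 2) * (B t).ncard := by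
          rw [e1]
      _ = _ := by ring
  rw [← Finset.sum_add_distrib, Finset.sum_congr rfl hterm, Finset.sum_add_distrib,
    ← Finset.mul_sum]
  have hterm2 : ∀ t ∈ Finset.range k',
      ((∑ s ∈ Finset.range k', (B s).ncard) - (B t).ncard) * (B t).ncard
        + (B t).ncard * (B t).ncard
      = (∑ s ∈ Finset.range k', (B s).ncard) * (B t).ncard := by
    intro t htm
    have hb := hble t (Finset.mem_range.mp htm)
    rw [Nat.sub_mul, Nat.sub_add_cancel (Nat.mul_le_mul_right _ hb)]
  have h3 : ∑ t ∈ Finset.range k',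
        (((∑ s ∈ Finset.range k', (B s).ncard) - (B t).ncard) * (B t).ncard)
      + ∑ t ∈ Finset.range k', (B t).ncard * (B t).ncard
      = (∑ s ∈ Finset.range k', (B s).ncard) * (∑ s ∈ Finset.range k', (B s).ncard) := by
    rw [← Finset.sum_add_distrib, Finset.sum_congr rfl hterm2, ← Finset.mul_sum]
  have hsq : (∑ s ∈ Finset.range k', (B s).ncard) * (∑ s ∈ Finset.range k', (B s).ncard)
      = 2 * ∑ q ∈ Pf, (B q.1).ncard * (B q.2).ncard
        + ∑ t ∈ Finset.range k', (B t).ncard * (B t).ncard :=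
    sq_sum_aux (Finset.range k') (fun t => (B t).ncard)
  rw [hNcard]
  omega
end

section
/- Let T be an unrooted binary phylogenetic tree on a finite taxon set X of size N, let x ≠ y be leaves, and let P be the path in T between x and y. For each internal node v on P (v ≠ x, y), deleting v and its incident edges partitions X into three sets A_v ∋ x, B_v ∋ y, and C_v (the taxa whose path to x or y joins P at v). Then the number of quartets displayed on T of the form xu|yz (separating x and y) equals Σ_{v on P, v≠x,y} |C_v|·(|B_v| − 1) = Σ_{v on P, v≠x,y} |C_v|·|B_v| − N + 2. -/
open Function

variable {X V : Type*}

/-- The set of taxa whose leaf can be connected to the vertex `u` by a path avoiding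
the vertex `v`; for `v` on the path `P` between two leaves, these are the components
of the deletion of `v` from the tree. -/
def compVert (G : SimpleGraph V) (leaf : X → V) (v u : V) : Set X :=
  {z : X | ∃ w : G.Walk (leaf z) u, v ∉ w.support}

section Helpers

open SimpleGraph Walk

variable {V : Type*} [DecidableEq V] {G : SimpleGraph V}

/-- The canonical path between two vertices of a tree. -/
noncomputable def tpath (ht : G.IsTree) (a b : V) : G.Walk a b :=
  ((ht.existsUnique_path a b).exists).choose

lemma tpath_isPath (ht : G.IsTree) (a b : V) : (tpath ht a b).IsPath :=
  ((ht.existsUnique_path a b).exists).choose_spec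

lemma tpath_eq (ht : G.IsTree) {a b : V} {r : G.Walk a b} (hr : r.IsPath) :
    r = tpath ht a b :=
  (ht.existsUnique_path a b).unique hr (tpath_isPath ht a b)

lemma tpath_support_subset (ht : G.IsTree) {a b : V} (W : G.Walk a b) :
    (tpath ht a b).support ⊆ W.support := by
  rw [← tpath_eq ht W.bypass_isPath]
  exact W.support_bypass_subset

lemma tpath_self (ht : G.IsTree) (a : V) : tpath ht a a = Walk.nil :=
  (tpath_eq ht Walk.IsPath.nil).symm

lemma mem_compVert {X : Type*} (leaf : X → V) (v u : V) (z : X) :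
    z ∈ compVert G leaf v u ↔ ∃ w : G.Walk (leaf z) u, v ∉ w.support := Iff.rfl

lemma mem_compVert_iff {X : Type*} (ht : G.IsTree) (leaf : X → V) (v u : V) (z : X) :
    z ∈ compVert G leaf v u ↔ v ∉ (tpath ht (leaf z) u).support := by
  constructor
  · rintro ⟨W, hW⟩ hmem
    exact hW (tpath_support_subset ht W hmem)
  · intro h
    exact ⟨_, h⟩

lemma isPath_append' {a b c : V} {r : G.Walk a b} {s : G.Walk b c} (hr : r.IsPath)
    (hs : s.IsPath) (h : ∀ u, u ∈ r.support → u ∈ s.support → u = b) :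
    (r.append s).IsPath := by
  have hcons := hs.support_nodup
  rw [s.support_eq_cons, List.nodup_cons] at hcons
  rw [Walk.isPath_def, Walk.support_append, List.nodup_append]
  refine ⟨hr.support_nodup, hcons.2, ?_⟩
  intro u hu w hu' huw
  subst huw
  have hub : u = b := h u hu (by rw [s.support_eq_cons]; exact List.mem_cons_of_mem _ hu')
  exact hcons.1 (hub ▸ hu')

lemma not_reachable_delete (ht : G.IsTree) {u v : V} (h : G.Adj u v) :
    ¬ (G.deleteEdges {s(u, v)}).Reachable u v := by
  intro hr
  obtain ⟨W⟩ := hr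
  have hP := W.bypass_isPath
  have hedges : ∀ e ∈ W.bypass.edges, e ∈ G.edgeSet := by
    intro e he
    have h5 := W.bypass.edges_subset_edgeSet he
    rw [SimpleGraph.edgeSet_deleteEdges] at h5
    exact h5.1
  have hq' : (W.bypass.transfer G hedges).IsPath := by
    rw [Walk.isPath_def, Walk.support_transfer]; exact hP.support_nodup
  have h1 : W.bypass.transfer G hedges = tpath ht u v := tpath_eq ht hq'
  have h2 : Walk.cons h Walk.nil = tpath ht u v :=
    tpath_eq ht (by simp [Walk.cons_isPath_iff, h.ne])
  have h3 : s(u, v) ∈ (W.bypass.transfer G hedges).edges := by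
    rw [h1, ← h2]; simp
  rw [Walk.edges_transfer] at h3
  have h4 := W.bypass.edges_subset_edgeSet h3
  rw [SimpleGraph.edgeSet_deleteEdges] at h4
  exact h4.2 rfl

lemma sideSet_eq {X : Type*} (ht : G.IsTree) (leaf : X → V) {u v : V} (h : G.Adj u v) :
    sideSet G leaf u v = compVert G leaf v u := by
  ext z
  constructor
  · intro hz
    obtain ⟨W⟩ := hz
    have hv : v ∉ W.support := by
      intro hv
      exact not_reachable_delete ht h (Reachable.symm ⟨W.dropUntil v hv⟩)
    have hedges : ∀ e ∈ W.edges, e ∈ G.edgeSet := by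
      intro e he
      have h5 := W.edges_subset_edgeSet he
      rw [SimpleGraph.edgeSet_deleteEdges] at h5
      exact h5.1
    refine ⟨W.transfer G hedges, ?_⟩
    rwa [Walk.support_transfer]
  · rintro ⟨W, hW⟩
    have he : ∀ e ∈ W.edges, e ∉ ({s(u, v)} : Set (Sym2 V)) := by
      intro e he hmem
      rw [Set.mem_singleton_iff] at hmem
      subst hmem
      exact hW (W.snd_mem_support_of_mem_edges he)
    exact ⟨W.toDeleteEdges _ he⟩

lemma takeUntil_eq (ht : G.IsTree) {a b u : V} (p : G.Walk a b) (hp : p.IsPath)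
    (hu : u ∈ p.support) : p.takeUntil u hu = tpath ht a u :=
  tpath_eq ht (hp.takeUntil hu)

lemma dropUntil_eq (ht : G.IsTree) {a b u : V} (p : G.Walk a b) (hp : p.IsPath)
    (hu : u ∈ p.support) : p.dropUntil u hu = tpath ht u b :=
  tpath_eq ht (hp.dropUntil hu)

lemma mem_take_or_drop {a b u c : V} (p : G.Walk a b) (hu : u ∈ p.support)
    (hc : c ∈ p.support) :
    c ∈ (p.takeUntil u hu).support ∨ c ∈ (p.dropUntil u hu).support := by
  rw [← Walk.take_spec p hu, Walk.mem_support_append_iff] at hc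
  exact hc

lemma take_drop_disjoint {a b u : V} {p : G.Walk a b} (hp : p.IsPath) (hu : u ∈ p.support)
    {c : V} (h1 : c ∈ (p.takeUntil u hu).support)
    (h2 : c ∈ (p.dropUntil u hu).support.tail) : False := by
  have h := hp.support_nodup
  rw [← Walk.take_spec p hu, Walk.support_append, List.nodup_append] at h
  exact h.2.2 c h1 c h2 rfl

lemma take_drop_inter {a b u : V} {p : G.Walk a b} (hp : p.IsPath) (hu : u ∈ p.support)
    {c : V} (h1 : c ∈ (p.takeUntil u hu).support)
    (h2 : c ∈ (p.dropUntil u hu).support) : c = u := by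
  rw [Walk.support_eq_cons (p.dropUntil u hu)] at h2
  rcases List.mem_cons.mp h2 with rfl | h2
  · rfl
  · exact absurd (take_drop_disjoint hp hu h1 h2) (by simp)

lemma tpath_support_subset_of_mem (ht : G.IsTree) {a b u w : V} (p : G.Walk a b)
    (hp : p.IsPath) (hu : u ∈ p.support) (hw : w ∈ p.support) :
    (tpath ht u w).support ⊆ p.support := by
  rcases mem_take_or_drop p hu hw with h | h
  · have h1 : ((p.takeUntil u hu).dropUntil w h).reverse = tpath ht u w :=
      tpath_eq ht ((hp.takeUntil hu).dropUntil h).reverse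
    rw [← h1, Walk.support_reverse]
    intro c hc
    rw [List.mem_reverse] at hc
    exact Walk.support_takeUntil_subset p hu (Walk.support_dropUntil_subset _ h hc)
  · have h1 : (p.dropUntil u hu).takeUntil w h = tpath ht u w :=
      tpath_eq ht ((hp.dropUntil hu).takeUntil h)
    rw [← h1]
    intro c hc
    exact Walk.support_dropUntil_subset p hu (Walk.support_takeUntil_subset _ h hc)

lemma exists_penult {a b : V} (W : G.Walk a b) (hab : a ≠ b) :
    ∃ c, G.Adj b c ∧ c ∈ W.support := by
  have hnn : ¬ W.reverse.Nil := Walk.not_nil_of_ne (Ne.symm hab)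
  obtain ⟨c, hadj, q, hq⟩ := Walk.not_nil_iff.mp hnn
  refine ⟨c, hadj, ?_⟩
  have hc : c ∈ W.reverse.support := by rw [hq]; simp
  rwa [Walk.support_reverse, List.mem_reverse] at hc

lemma not_mem_path_of_degree_one {v a b : V} (hd : (G.neighborSet v).ncard = 1)
    (W : G.Walk a b) (hW : W.IsPath) (ha : a ≠ v) (hb : b ≠ v) : v ∉ W.support := by
  intro hv
  obtain ⟨n, hn⟩ := Set.ncard_eq_one.mp hd
  obtain ⟨c1, hc1adj, hc1mem⟩ := exists_penult (W.takeUntil v hv) ha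
  have hnn : ¬ (W.dropUntil v hv).Nil := Walk.not_nil_of_ne (Ne.symm hb)
  obtain ⟨c2, hc2adj, q, hq⟩ := Walk.not_nil_iff.mp hnn
  have hc2mem : c2 ∈ (W.dropUntil v hv).support.tail := by
    rw [hq, Walk.support_cons]
    simp
  have hne : c1 ≠ c2 := fun h => take_drop_disjoint hW hv hc1mem (h ▸ hc2mem)
  have e1 : c1 ∈ G.neighborSet v := hc1adj
  have e2 : c2 ∈ G.neighborSet v := hc2adj
  rw [hn, Set.mem_singleton_iff] at e1 e2
  exact hne (e1.trans e2.symm)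

lemma exists_firstmeet (S : Set V) :
    ∀ {a c : V} (q : G.Walk a c), c ∈ S →
      ∃ m, m ∈ S ∧ ∃ (r : G.Walk a m) (r' : G.Walk m c),
        q = r.append r' ∧ ∀ u ∈ r.support, u ∈ S → u = m := by
  intro a c q
  induction q with
  | nil => exact fun hc => ⟨_, hc, Walk.nil, Walk.nil, rfl, by simp⟩
  | @cons a b c h q ih =>
    intro hc
    by_cases ha : a ∈ S
    · exact ⟨a, ha, Walk.nil, Walk.cons h q, (Walk.nil_append _).symm, by simp⟩
    · obtain ⟨m, hm, r, r', hq, hr⟩ := ih hc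
      refine ⟨m, hm, Walk.cons h r, r', by rw [Walk.cons_append, ← hq], ?_⟩
      intro u hu huS
      rw [Walk.support_cons] at hu
      rcases List.mem_cons.mp hu with rfl | hu
      · exact absurd huS ha
      · exact hr u hu huS

end Helpers

open SimpleGraph Walk

/-- **Lemma (path-counting formula for separating quartets).** Let `T` be an unrooted
binary phylogenetic tree on `X` with `|X| = N`, let `x ≠ y` be taxa, and let `P` be the
path between their leaves. For each vertex `v` on `P` other than the endpoints, deleting
`v` splits `X` into `A_v ∋ x`, `B_v ∋ y`, and the remainder `C_v`. Then the number of
quartets displayed on `T` of the form `xu|yz` equals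
`Σ_v |C_v|·(|B_v| - 1) = Σ_v |C_v|·|B_v| - N + 2`,
the sums being over the vertices of `P` other than its endpoints. -/
theorem separating_quartets_path_count
    {X V : Type*} [Fintype X] [Fintype V] [DecidableEq V]
    (T : UPhylo X V) (hbin : T.IsBinary)
    (x y : X) (hxy : x ≠ y)
    (p : T.G.Walk (T.leaf x) (T.leaf y)) (hp : p.IsPath) :
    ((({zw : X × X | zw.1 ≠ zw.2 ∧ zw.1 ≠ x ∧ zw.1 ≠ y ∧ zw.2 ≠ x ∧ zw.2 ≠ y ∧
          DisplaysQuartet T.G T.leaf x zw.1 y zw.2} : Set (X × X)).ncard : ℤ)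
        = ((p.support.filter (fun v => decide (v ≠ T.leaf x ∧ v ≠ T.leaf y))).map
            (fun v =>
              (((Set.univ : Set X) \ (compVert T.G T.leaf v (T.leaf x) ∪
                  compVert T.G T.leaf v (T.leaf y))).ncard : ℤ) *
                (((compVert T.G T.leaf v (T.leaf y)).ncard : ℤ) - 1))).sum) ∧
    ((({zw : X × X | zw.1 ≠ zw.2 ∧ zw.1 ≠ x ∧ zw.1 ≠ y ∧ zw.2 ≠ x ∧ zw.2 ≠ y ∧
          DisplaysQuartet T.G T.leaf x zw.1 y zw.2} : Set (X × X)).ncard : ℤ)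
        = ((p.support.filter (fun v => decide (v ≠ T.leaf x ∧ v ≠ T.leaf y))).map
            (fun v =>
              (((Set.univ : Set X) \ (compVert T.G T.leaf v (T.leaf x) ∪
                  compVert T.G T.leaf v (T.leaf y))).ncard : ℤ) *
                ((compVert T.G T.leaf v (T.leaf y)).ncard : ℤ))).sum
          - (Fintype.card X : ℤ) + 2) := by
  classical
  have ht := T.isTree
  have hinj := T.leaf_inj
  have hlxy : T.leaf x ≠ T.leaf y := fun h => hxy (hinj h)
  have hpx : T.leaf x ∈ p.support := p.start_mem_support
  have hpy : T.leaf y ∈ p.support := p.end_mem_support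
  -- existence of the attachment point on the path, for every taxon other than x, y
  have hatt : ∀ z : X, z ≠ x → z ≠ y → ∃ m' : V, ∃ r : T.G.Walk (T.leaf z) m',
      ((m' ∈ p.support ∧ m' ≠ T.leaf x) ∧ m' ≠ T.leaf y) ∧ r.IsPath ∧
        (∀ u ∈ r.support, u ∈ p.support → u = m') := by
    intro z hz1 hz2
    have hq : (tpath ht (T.leaf z) (T.leaf y)).IsPath := tpath_isPath ht _ _
    have hlyS : T.leaf y ∈ {v : V | v ∈ p.support} := hpy
    obtain ⟨m', hm'S, r, r', hqeq, hmeet⟩ :=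
      exists_firstmeet {v : V | v ∈ p.support} (tpath ht (T.leaf z) (T.leaf y)) hlyS
    have hrP : r.IsPath := by
      rw [hqeq] at hq; exact hq.of_append_left
    have hxnot : T.leaf x ∉ (tpath ht (T.leaf z) (T.leaf y)).support :=
      not_mem_path_of_degree_one (T.leaf_deg x) _ (tpath_isPath ht _ _)
        (hinj.ne hz1) (Ne.symm hlxy)
    have hm'x : m' ≠ T.leaf x := by
      intro hE
      apply hxnot
      rw [hqeq, Walk.mem_support_append_iff]
      exact Or.inl (hE ▸ r.end_mem_support)
    have hm'y : m' ≠ T.leaf y := by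
      intro hE
      subst hE
      have hr'P : r'.IsPath := by
        rw [hqeq] at hq; exact hq.of_append_right
      have hr'nil : r' = Walk.nil := (Walk.isPath_iff_eq_nil).mp hr'P
      obtain ⟨c, hcadj, hcmem⟩ := exists_penult (tpath ht (T.leaf z) (T.leaf y)) (hinj.ne hz2)
      obtain ⟨c', hc'adj, hc'mem⟩ := exists_penult p hlxy
      obtain ⟨n, hn⟩ := Set.ncard_eq_one.mp (T.leaf_deg y)
      have e1 : c ∈ T.G.neighborSet (T.leaf y) := hcadj
      have e2 : c' ∈ T.G.neighborSet (T.leaf y) := hc'adj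
      rw [hn, Set.mem_singleton_iff] at e1 e2
      have hcr : c ∈ r.support := by
        rw [hqeq, hr'nil, Walk.append_nil] at hcmem
        exact hcmem
      have hcp : c ∈ {v : V | v ∈ p.support} := by
        show c ∈ p.support
        rw [e1.trans e2.symm]
        exact hc'mem
      exact hcadj.ne' (hmeet c hcr hcp)
    exact ⟨m', r, ⟨⟨hm'S, hm'x⟩, hm'y⟩, hrP, hmeet⟩
  choose m mr hm using hatt
  have hmS : ∀ z h1 h2, m z h1 h2 ∈ p.support := fun z h1 h2 => (hm z h1 h2).1.1.1
  have hmx : ∀ z h1 h2, m z h1 h2 ≠ T.leaf x := fun z h1 h2 => (hm z h1 h2).1.1.2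
  have hmy : ∀ z h1 h2, m z h1 h2 ≠ T.leaf y := fun z h1 h2 => (hm z h1 h2).1.2
  have hmrP : ∀ z h1 h2, (mr z h1 h2).IsPath := fun z h1 h2 => (hm z h1 h2).2.1
  have hmeet : ∀ z h1 h2, ∀ u ∈ (mr z h1 h2).support, u ∈ p.support → u = m z h1 h2 :=
    fun z h1 h2 => (hm z h1 h2).2.2
  -- decomposition of the path from a taxon to any vertex on p
  have hcomp : ∀ z (h1 : z ≠ x) (h2 : z ≠ y), ∀ a, ∀ ha : a ∈ p.support,
      tpath ht (T.leaf z) a = (mr z h1 h2).append (tpath ht (m z h1 h2) a) := by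
    intro z h1 h2 a ha
    refine (tpath_eq ht ?_).symm
    refine isPath_append' (hmrP z h1 h2) (tpath_isPath ht _ _) ?_
    intro u hu hu'
    exact hmeet z h1 h2 u hu (tpath_support_subset_of_mem ht p hp (hmS z h1 h2) ha hu')
  -- membership criteria
  have hCiff : ∀ (v : V) (z : X),
      z ∈ (Set.univ : Set X) \ (compVert T.G T.leaf v (T.leaf x) ∪
          compVert T.G T.leaf v (T.leaf y)) ↔
        v ∈ (tpath ht (T.leaf z) (T.leaf x)).support ∧
          v ∈ (tpath ht (T.leaf z) (T.leaf y)).support := by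
    intro v z
    rw [Set.mem_diff, Set.mem_union, mem_compVert_iff ht, mem_compVert_iff ht]
    simp only [Set.mem_univ, true_and, not_or, not_not]
  have hBiff : ∀ (v : V) (z : X), z ∈ compVert T.G T.leaf v (T.leaf y) ↔
      v ∉ (tpath ht (T.leaf z) (T.leaf y)).support :=
    fun v z => mem_compVert_iff ht T.leaf v (T.leaf y) z
  have hCm : ∀ v, v ∈ p.support → ∀ z (h1 : z ≠ x) (h2 : z ≠ y),
      (z ∈ (Set.univ : Set X) \ (compVert T.G T.leaf v (T.leaf x) ∪
          compVert T.G T.leaf v (T.leaf y)) ↔ v = m z h1 h2) := by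
    intro v hv z h1 h2
    rw [hCiff]
    constructor
    · rintro ⟨hvx, hvy⟩
      rw [hcomp z h1 h2 _ hpx, Walk.mem_support_append_iff] at hvx
      rw [hcomp z h1 h2 _ hpy, Walk.mem_support_append_iff] at hvy
      rcases hvx with hvx | hvx
      · exact hmeet z h1 h2 v hvx hv
      rcases hvy with hvy | hvy
      · exact hmeet z h1 h2 v hvy hv
      have hms := hmS z h1 h2
      have e1 : (p.takeUntil _ hms).reverse = tpath ht (m z h1 h2) (T.leaf x) :=
        tpath_eq ht (hp.takeUntil hms).reverse
      have e2 : p.dropUntil _ hms = tpath ht (m z h1 h2) (T.leaf y) :=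
        dropUntil_eq ht p hp hms
      rw [← e1, Walk.support_reverse, List.mem_reverse] at hvx
      rw [← e2] at hvy
      exact take_drop_inter hp hms hvx hvy
    · rintro rfl
      constructor
      · rw [hcomp z h1 h2 _ hpx, Walk.mem_support_append_iff]
        exact Or.inl (mr z h1 h2).end_mem_support
      · rw [hcomp z h1 h2 _ hpy, Walk.mem_support_append_iff]
        exact Or.inl (mr z h1 h2).end_mem_support
  have hCne : ∀ v, v ≠ T.leaf x → v ≠ T.leaf y → ∀ z : X,
      z ∈ (Set.univ : Set X) \ (compVert T.G T.leaf v (T.leaf x) ∪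
          compVert T.G T.leaf v (T.leaf y)) → z ≠ x ∧ z ≠ y := by
    intro v hvx hvy z hz
    rw [hCiff] at hz
    constructor
    · rintro rfl
      rw [tpath_self ht] at hz
      exact hvx (by simpa using hz.1)
    · rintro rfl
      rw [tpath_self ht] at hz
      exact hvy (by simpa using hz.2)
  have hyB : ∀ v, v ≠ T.leaf y → y ∈ compVert T.G T.leaf v (T.leaf y) := by
    intro v hv
    exact ⟨Walk.nil, by simpa using hv⟩
  -- the backwards direction of the characterization
  have hdisp1 : ∀ v, ∀ hv : v ∈ p.support, v ≠ T.leaf x → v ≠ T.leaf y → ∀ z w : X,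
      z ∈ (Set.univ : Set X) \ (compVert T.G T.leaf v (T.leaf x) ∪
          compVert T.G T.leaf v (T.leaf y)) →
      w ∈ compVert T.G T.leaf v (T.leaf y) → w ≠ y →
      (z ≠ w ∧ z ≠ x ∧ z ≠ y ∧ w ≠ x ∧ w ≠ y ∧ DisplaysQuartet T.G T.leaf x z y w) := by
    intro v hv hvx hvy z w hzC hwB hwy
    obtain ⟨hz1, hz2⟩ := hCne v hvx hvy z hzC
    have hzw : z ≠ w := by
      rintro rfl
      exact (hBiff v z).mp hwB ((hCiff v z).mp hzC).2
    have hwx : w ≠ x := by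
      intro hE
      apply (hBiff v w).mp hwB
      rw [hE, ← tpath_eq ht hp]
      exact hv
    have hvm : v = m z hz1 hz2 := (hCm v hv z hz1 hz2).mp hzC
    have hpd : ¬ (p.dropUntil v hv).Nil := Walk.not_nil_of_ne hvy
    obtain ⟨v', hadj, q, hq⟩ := Walk.not_nil_iff.mp hpd
    have hqP : (Walk.cons hadj q).IsPath := hq ▸ hp.dropUntil hv
    have hvq : v ∉ q.support := ((Walk.cons_isPath_iff hadj q).mp hqP).2
    have hqsub : q.support ⊆ p.support := by
      intro c hc
      apply Walk.support_dropUntil_subset p hv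
      rw [hq, Walk.support_cons]
      exact List.mem_cons_of_mem _ hc
    have hv'p : v' ∈ p.support := hqsub q.start_mem_support
    have hv'take : v' ∉ (p.takeUntil v hv).support := by
      intro hc
      refine take_drop_disjoint hp hv hc ?_
      rw [hq, Walk.support_cons]
      simpa using q.start_mem_support
    refine ⟨hzw, hz1, hz2, hwx, hwy, ?_⟩
    unfold DisplaysQuartet
    refine ⟨v, v', hadj, ?_, ?_, ?_, ?_⟩
    · rw [sideSet_eq ht T.leaf hadj]
      exact ⟨p.takeUntil v hv, hv'take⟩
    · rw [sideSet_eq ht T.leaf hadj]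
      refine ⟨(mr z hz1 hz2).copy rfl hvm.symm, ?_⟩
      rw [Walk.support_copy]
      intro hc
      have hE : v' = v := (hmeet z hz1 hz2 v' hc hv'p).trans hvm.symm
      exact hadj.ne hE.symm
    · rw [sideSet_eq ht T.leaf hadj.symm]
      exact ⟨q.reverse, by rwa [Walk.support_reverse, List.mem_reverse]⟩
    · rw [sideSet_eq ht T.leaf hadj.symm]
      obtain ⟨W, hW⟩ := hwB
      refine ⟨W.append q.reverse, ?_⟩
      rw [Walk.mem_support_append_iff]
      rintro (hc | hc)
      · exact hW hc
      · rw [Walk.support_reverse, List.mem_reverse] at hc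
        exact hvq hc
  -- the forwards direction of the characterization
  have hdisp2 : ∀ z w, ∀ h1 : z ≠ x, ∀ h2 : z ≠ y, w ≠ x → w ≠ y →
      DisplaysQuartet T.G T.leaf x z y w →
      w ∈ compVert T.G T.leaf (m z h1 h2) (T.leaf y) := by
    intro z w h1 h2 h3 h4 hD
    unfold DisplaysQuartet at hD
    obtain ⟨u, u', hadj, hxS, hzS, hyS, hwS⟩ := hD
    have hedge : s(u, u') ∈ p.edges := by
      by_contra hne
      have hpe : ∀ e ∈ p.edges, e ∉ ({s(u, u')} : Set (Sym2 V)) := by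
        intro e he hmem
        rw [Set.mem_singleton_iff] at hmem
        exact hne (hmem ▸ he)
      have hxR : (T.G.deleteEdges {s(u, u')}).Reachable (T.leaf x) u := hxS
      have hyR : (T.G.deleteEdges {s(u, u')}).Reachable (T.leaf y) u' := by
        rw [Sym2.eq_swap]
        exact hyS
      have hpR : (T.G.deleteEdges {s(u, u')}).Reachable (T.leaf x) (T.leaf y) :=
        ⟨p.toDeleteEdges _ hpe⟩
      exact not_reachable_delete ht hadj (hxR.symm.trans (hpR.trans hyR))
    rw [sideSet_eq ht T.leaf hadj] at hxS hzS
    rw [sideSet_eq ht T.leaf hadj.symm] at hyS hwS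
    rw [mem_compVert_iff ht] at hxS hzS hyS hwS
    have hu : u ∈ p.support := p.fst_mem_support_of_mem_edges hedge
    have hu' : u' ∈ p.support := p.snd_mem_support_of_mem_edges hedge
    have h1' : u ∉ (tpath ht u' (T.leaf y)).support := by
      intro hc
      apply hyS
      have e3 : (tpath ht u' (T.leaf y)).reverse = tpath ht (T.leaf y) u' :=
        tpath_eq ht (tpath_isPath ht _ _).reverse
      rw [← e3, Walk.support_reverse, List.mem_reverse]
      exact hc
    have h2' : u' ∈ (tpath ht u (T.leaf y)).support := by
      rcases mem_take_or_drop p hu hu' with hc | hc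
      · rw [takeUntil_eq ht p hp hu] at hc
        exact absurd hc hxS
      · rw [dropUntil_eq ht p hp hu] at hc
        exact hc
    have hconsU : tpath ht u (T.leaf y) = Walk.cons hadj (tpath ht u' (T.leaf y)) := by
      have : (Walk.cons hadj (tpath ht u' (T.leaf y))).IsPath :=
        (tpath_isPath ht u' (T.leaf y)).cons h1'
      exact (tpath_eq ht this).symm
    have hmz := hmS z h1 h2
    have hiu : u ∈ (tpath ht (m z h1 h2) (T.leaf y)).support := by
      by_cases hum : u = m z h1 h2
      · exact hum ▸ Walk.start_mem_support _
      rcases mem_take_or_drop p hmz hu with hc | hc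
      · exfalso
        have hs0 : ((p.takeUntil _ hmz).dropUntil u hc).append
            (tpath ht (m z h1 h2) (T.leaf y)) = tpath ht u (T.leaf y) := by
          apply tpath_eq
          refine isPath_append' ((hp.takeUntil hmz).dropUntil hc) (tpath_isPath ht _ _) ?_
          intro c hc1 hc2
          have hcc1 : c ∈ (p.takeUntil _ hmz).support :=
            Walk.support_dropUntil_subset _ hc hc1
          have hcc2 : c ∈ (p.dropUntil _ hmz).support := by
            rw [dropUntil_eq ht p hp hmz]
            exact hc2
          exact take_drop_inter hp hmz hcc1 hcc2
        have hm_in : m z h1 h2 ∈ (tpath ht u (T.leaf y)).support := by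
          rw [← hs0, Walk.mem_support_append_iff]
          exact Or.inl (Walk.end_mem_support _)
        rw [hconsU, Walk.support_cons] at hm_in
        rcases List.mem_cons.mp hm_in with hE | hm_in'
        · exact hum hE.symm
        have hnotu : u ∉ (tpath ht u' (m z h1 h2)).support := by
          have e6 : (tpath ht u' (T.leaf y)).takeUntil _ hm_in' =
              tpath ht u' (m z h1 h2) :=
            takeUntil_eq ht _ (tpath_isPath ht _ _) hm_in'
          rw [← e6]
          intro hcu
          exact h1' (Walk.support_takeUntil_subset _ hm_in' hcu)
        have hconsM : tpath ht u (m z h1 h2) =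
            Walk.cons hadj (tpath ht u' (m z h1 h2)) := by
          have : (Walk.cons hadj (tpath ht u' (m z h1 h2))).IsPath :=
            (tpath_isPath ht u' _).cons hnotu
          exact (tpath_eq ht this).symm
        have hrev : (tpath ht u (m z h1 h2)).reverse = tpath ht (m z h1 h2) u :=
          tpath_eq ht (tpath_isPath ht _ _).reverse
        have hu'mem : u' ∈ (tpath ht (m z h1 h2) u).support := by
          rw [← hrev, Walk.support_reverse, List.mem_reverse, hconsM, Walk.support_cons]
          exact List.mem_cons_of_mem _ (Walk.start_mem_support _)
        rw [hcomp z h1 h2 u hu, Walk.mem_support_append_iff] at hzS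
        push_neg at hzS
        exact hzS.2 hu'mem
      · rw [dropUntil_eq ht p hp hmz] at hc
        exact hc
    rw [mem_compVert_iff ht]
    rw [hcomp w h3 h4 _ hpy, Walk.mem_support_append_iff]
    push_neg
    have hgoal : m z h1 h2 ∉ (tpath ht (m w h3 h4) (T.leaf y)).support := by
      intro hin
      have hsub : (tpath ht (m z h1 h2) (T.leaf y)).support ⊆
          (tpath ht (m w h3 h4) (T.leaf y)).support := by
        rw [← dropUntil_eq ht _ (tpath_isPath ht (m w h3 h4) (T.leaf y)) hin]
        exact Walk.support_dropUntil_subset _ hin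
      have huW : u ∈ (tpath ht (m w h3 h4) (T.leaf y)).support := hsub hiu
      have hu'W : u' ∈ (tpath ht (m w h3 h4) (T.leaf y)).support := by
        have h2'' := h2'
        rw [← dropUntil_eq ht _ (tpath_isPath ht (m w h3 h4) (T.leaf y)) huW] at h2''
        exact Walk.support_dropUntil_subset _ huW h2''
      rcases mem_take_or_drop (tpath ht (m w h3 h4) (T.leaf y)) hu'W huW with hc | hc
      · rw [takeUntil_eq ht _ (tpath_isPath ht _ _) hu'W] at hc
        rw [hcomp w h3 h4 u' hu', Walk.mem_support_append_iff] at hwS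
        push_neg at hwS
        exact hwS.2 hc
      · rw [dropUntil_eq ht _ (tpath_isPath ht _ _) hu'W] at hc
        exact h1' hc
    constructor
    · intro hin
      apply hgoal
      rw [hmeet w h3 h4 _ hin hmz]
      exact Walk.start_mem_support _
    · exact hgoal
  -- the counting argument
  set L := p.support.filter (fun v => decide (v ≠ T.leaf x ∧ v ≠ T.leaf y)) with hL
  have hLmem : ∀ v, v ∈ L ↔ (v ∈ p.support ∧ v ≠ T.leaf x ∧ v ≠ T.leaf y) := by
    intro v
    rw [hL, List.mem_filter]
    simp
  have hLnd : L.Nodup := hp.support_nodup.filter _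
  have hCfin : ∀ v : V, ((Set.univ : Set X) \ (compVert T.G T.leaf v (T.leaf x) ∪
      compVert T.G T.leaf v (T.leaf y))).Finite := fun v => Set.toFinite _
  have hBfin : ∀ v : V, (compVert T.G T.leaf v (T.leaf y)).Finite := fun v => Set.toFinite _
  set F : Finset (X × X) :=
    L.toFinset.biUnion (fun v => (hCfin v).toFinset ×ˢ ((hBfin v).toFinset.erase y)) with hF
  have hQF : {zw : X × X | zw.1 ≠ zw.2 ∧ zw.1 ≠ x ∧ zw.1 ≠ y ∧ zw.2 ≠ x ∧ zw.2 ≠ y ∧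
      DisplaysQuartet T.G T.leaf x zw.1 y zw.2} = (↑F : Set (X × X)) := by
    ext zw
    obtain ⟨z, w⟩ := zw
    rw [Set.mem_setOf_eq, Finset.mem_coe, hF, Finset.mem_biUnion]
    constructor
    · rintro ⟨hzw, hz1, hz2, hw1, hw2, hD⟩
      refine ⟨m z hz1 hz2, List.mem_toFinset.mpr ((hLmem _).mpr
        ⟨hmS z hz1 hz2, hmx z hz1 hz2, hmy z hz1 hz2⟩), ?_⟩
      rw [Finset.mem_product]
      constructor
      · rw [Set.Finite.mem_toFinset]
        exact (hCm _ (hmS z hz1 hz2) z hz1 hz2).mpr rfl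
      · rw [Finset.mem_erase, Set.Finite.mem_toFinset]
        exact ⟨hw2, hdisp2 z w hz1 hz2 hw1 hw2 hD⟩
    · rintro ⟨v, hvL, hzw⟩
      rw [Finset.mem_product] at hzw
      obtain ⟨hzC, hwB⟩ := hzw
      rw [Set.Finite.mem_toFinset] at hzC
      rw [Finset.mem_erase, Set.Finite.mem_toFinset] at hwB
      obtain ⟨hvp, hvx, hvy⟩ := (hLmem v).mp (List.mem_toFinset.mp hvL)
      exact hdisp1 v hvp hvx hvy z w hzC hwB.2 hwB.1
  have hdisjC : ∀ v ∈ L, ∀ v' ∈ L, v ≠ v' → ∀ z : X,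
      z ∈ (Set.univ : Set X) \ (compVert T.G T.leaf v (T.leaf x) ∪
          compVert T.G T.leaf v (T.leaf y)) →
      z ∈ (Set.univ : Set X) \ (compVert T.G T.leaf v' (T.leaf x) ∪
          compVert T.G T.leaf v' (T.leaf y)) → False := by
    intro v hv v' hv' hne z hz hz'
    obtain ⟨hvp, hvx, hvy⟩ := (hLmem v).mp hv
    obtain ⟨hv'p, _, _⟩ := (hLmem v').mp hv'
    obtain ⟨hz1, hz2⟩ := hCne v hvx hvy z hz
    exact hne (((hCm v hvp z hz1 hz2).mp hz).trans (((hCm v' hv'p z hz1 hz2).mp hz').symm))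
  have hFcard : F.card = ∑ v ∈ L.toFinset,
      ((Set.univ : Set X) \ (compVert T.G T.leaf v (T.leaf x) ∪
          compVert T.G T.leaf v (T.leaf y))).ncard *
        ((compVert T.G T.leaf v (T.leaf y)).ncard - 1) := by
    rw [hF, Finset.card_biUnion]
    · apply Finset.sum_congr rfl
      intro v hv
      obtain ⟨hvp, hvx, hvy⟩ := (hLmem v).mp (List.mem_toFinset.mp hv)
      rw [Finset.card_product, Finset.card_erase_of_mem
        ((Set.Finite.mem_toFinset _).mpr (hyB v hvy)),
        ← Set.ncard_eq_toFinset_card _ (hCfin v), ← Set.ncard_eq_toFinset_card _ (hBfin v)]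
    · intro v hv v' hv' hne
      rw [Function.onFun, Finset.disjoint_left]
      rintro ⟨a, b⟩ hab hab'
      rw [Finset.mem_product] at hab hab'
      exact hdisjC v (List.mem_toFinset.mp hv) v' (List.mem_toFinset.mp hv') hne a
        ((Set.Finite.mem_toFinset _).mp hab.1) ((Set.Finite.mem_toFinset _).mp hab'.1)
  have hQn : ({zw : X × X | zw.1 ≠ zw.2 ∧ zw.1 ≠ x ∧ zw.1 ≠ y ∧ zw.2 ≠ x ∧ zw.2 ≠ y ∧
      DisplaysQuartet T.G T.leaf x zw.1 y zw.2} : Set (X × X)).ncard = F.card := by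
    rw [hQF, Set.ncard_coe_finset]
  have hBpos : ∀ v ∈ L.toFinset, 1 ≤ (compVert T.G T.leaf v (T.leaf y)).ncard := by
    intro v hv
    obtain ⟨_, _, hvy⟩ := (hLmem v).mp (List.mem_toFinset.mp hv)
    exact (Set.ncard_pos (Set.toFinite _)).mpr ⟨y, hyB v hvy⟩
  have hN2 : 2 ≤ Fintype.card X := Fintype.one_lt_card_iff_nontrivial.mpr ⟨x, y, hxy⟩
  have hpart : L.toFinset.biUnion (fun v => (hCfin v).toFinset) = Finset.univ \ {x, y} := by
    ext z
    rw [Finset.mem_biUnion, Finset.mem_sdiff]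
    simp only [Finset.mem_univ, true_and, Finset.mem_insert, Finset.mem_singleton,
      List.mem_toFinset, Set.Finite.mem_toFinset, not_or]
    constructor
    · rintro ⟨v, hvL, hz⟩
      obtain ⟨hvp, hvx, hvy⟩ := (hLmem v).mp hvL
      exact hCne v hvx hvy z hz
    · rintro ⟨h1, h2⟩
      exact ⟨m z h1 h2, (hLmem _).mpr ⟨hmS z h1 h2, hmx z h1 h2, hmy z h1 h2⟩,
        (hCm _ (hmS z h1 h2) z h1 h2).mpr rfl⟩
  have hsumC : ∑ v ∈ L.toFinset,
      ((Set.univ : Set X) \ (compVert T.G T.leaf v (T.leaf x) ∪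
          compVert T.G T.leaf v (T.leaf y))).ncard = Fintype.card X - 2 := by
    have hd : ∀ v ∈ L.toFinset, ∀ v' ∈ L.toFinset, v ≠ v' →
        Disjoint ((hCfin v).toFinset) ((hCfin v').toFinset) := by
      intro v hv v' hv' hne
      rw [Finset.disjoint_left]
      intro a ha ha'
      exact hdisjC v (List.mem_toFinset.mp hv) v' (List.mem_toFinset.mp hv') hne a
        ((Set.Finite.mem_toFinset _).mp ha) ((Set.Finite.mem_toFinset _).mp ha')
    calc ∑ v ∈ L.toFinset, ((Set.univ : Set X) \ (compVert T.G T.leaf v (T.leaf x) ∪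
            compVert T.G T.leaf v (T.leaf y))).ncard
        = ∑ v ∈ L.toFinset, ((hCfin v).toFinset).card :=
          Finset.sum_congr rfl (fun v _ => Set.ncard_eq_toFinset_card _ (hCfin v))
      _ = (L.toFinset.biUnion (fun v => (hCfin v).toFinset)).card :=
          (Finset.card_biUnion hd).symm
      _ = (Finset.univ \ ({x, y} : Finset X)).card := by rw [hpart]
      _ = Fintype.card X - 2 := by
          rw [Finset.card_sdiff_of_subset (Finset.subset_univ _), Finset.card_univ]
          congr 1
          rw [Finset.card_insert_of_notMem (by simp [hxy]), Finset.card_singleton]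
  have goal1 : ((({zw : X × X | zw.1 ≠ zw.2 ∧ zw.1 ≠ x ∧ zw.1 ≠ y ∧ zw.2 ≠ x ∧ zw.2 ≠ y ∧
        DisplaysQuartet T.G T.leaf x zw.1 y zw.2} : Set (X × X)).ncard : ℤ)
      = ((L.map (fun v =>
            (((Set.univ : Set X) \ (compVert T.G T.leaf v (T.leaf x) ∪
                compVert T.G T.leaf v (T.leaf y))).ncard : ℤ) *
              (((compVert T.G T.leaf v (T.leaf y)).ncard : ℤ) - 1))).sum)) := by
    rw [hQn, hFcard, ← List.sum_toFinset _ hLnd, Nat.cast_sum]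
    apply Finset.sum_congr rfl
    intro v hv
    rw [Nat.cast_mul, Nat.cast_sub (hBpos v hv), Nat.cast_one]
  refine ⟨goal1, ?_⟩
  rw [goal1, ← List.sum_toFinset _ hLnd, ← List.sum_toFinset _ hLnd]
  have hsplit : ∑ v ∈ L.toFinset,
      ((((Set.univ : Set X) \ (compVert T.G T.leaf v (T.leaf x) ∪
          compVert T.G T.leaf v (T.leaf y))).ncard : ℤ) *
        (((compVert T.G T.leaf v (T.leaf y)).ncard : ℤ) - 1))
      = (∑ v ∈ L.toFinset,
          ((((Set.univ : Set X) \ (compVert T.G T.leaf v (T.leaf x) ∪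
              compVert T.G T.leaf v (T.leaf y))).ncard : ℤ) *
            ((compVert T.G T.leaf v (T.leaf y)).ncard : ℤ)))
        - ∑ v ∈ L.toFinset,
            (((Set.univ : Set X) \ (compVert T.G T.leaf v (T.leaf x) ∪
                compVert T.G T.leaf v (T.leaf y))).ncard : ℤ) := by
    rw [← Finset.sum_sub_distrib]
    apply Finset.sum_congr rfl
    intro v _
    ring
  rw [hsplit]
  have hc2 : ∑ v ∈ L.toFinset,
      (((Set.univ : Set X) \ (compVert T.G T.leaf v (T.leaf x) ∪
          compVert T.G T.leaf v (T.leaf y))).ncard : ℤ)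
      = (Fintype.card X : ℤ) - 2 := by
    rw [← Nat.cast_sum, hsumC, Nat.cast_sub hN2]
    norm_num
  rw [hc2]
  ring
end
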